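/- arXiv:1304.5376 — 11 statements merged into one kernel-verified Lean document; each statement's English description precedes it below -/
import Mathlib

section
/- Let R be a commutative ring and let 0 → A'_• → A_• → A''_• → 0 be a short exact sequence of inductive systems of R-modules indexed by ℕ. If the system (A_n) is (N,φ)-essentially constant and the system (A''_n) is (N'',φ'')-essentially constant, then the system (A'_n) is (φ''(N), φ)-essentially constant. (This is one direction of Proposition 5.6 of the paper, with the explicit constants produced by its proof.) -/
/-!
The kernel condition passes to `A'` because `u` is injective, so `ker a'_{j,k}` is the preimage
of `ker a_{j,k}`. For the image condition, let `M = φ''(N)` and `j ≥ M`. An element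
`a'_{j,φ(j)} x` maps into `im a_{j,φ(j)} = im a_{N,φ(j)}`, say to `a_{N,φ(j)} y`. Then `v y` dies in
`A''_{φ(j)}`, hence already in `A''_M` because `φ(j) ≥ M = φ''(N)`; so `a_{N,M} y` lies in the
image of `u`, and pushing its preimage to `A'_{φ(j)}` recovers `a'_{j,φ(j)} x`.
-/

/-- An inductive system `(A n)` of `R`-modules with transition maps `a` (satisfying the
usual identity and composition laws) is `(N, φ)`-essentially constant: `φ j ≥ j` for all `j`,
`ker (a_{j,φ(j)}) = ker (a_{j,k})` for all `k ≥ φ j`, and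
`im (a_{N,φ(j)}) = im (a_{j,φ(j)})` for all `j ≥ N`. -/
def IsEssentiallyConstant {R : Type*} [CommRing R]
    (A : ℕ → Type*) [∀ n, AddCommGroup (A n)] [∀ n, Module R (A n)]
    (a : ∀ n m, n ≤ m → (A n →ₗ[R] A m)) (N : ℕ) (φ : ℕ → ℕ) : Prop :=
  (∀ j, j ≤ φ j) ∧
  (∀ j k (h₁ : j ≤ φ j) (h₂ : j ≤ k), φ j ≤ k →
    LinearMap.ker (a j (φ j) h₁) = LinearMap.ker (a j k h₂)) ∧
  (∀ j, N ≤ j → ∀ (h₁ : N ≤ φ j) (h₂ : j ≤ φ j),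
    LinearMap.range (a N (φ j) h₁) = LinearMap.range (a j (φ j) h₂))

open LinearMap

section Square

variable {R : Type*} [Semiring R] {M' N' M N : Type*}
  [AddCommMonoid M'] [Module R M'] [AddCommMonoid N'] [Module R N']
  [AddCommMonoid M] [Module R M] [AddCommMonoid N] [Module R N]
  {f' : M' →ₗ[R] N'} {f : M →ₗ[R] N} {g : M' →ₗ[R] M} {g' : N' →ₗ[R] N}

theorem LinearMap.ker_eq_comap_ker_of_comp_eq (hg' : Function.Injective g')
    (hcomm : g'.comp f' = f.comp g) : ker f' = (ker f).comap g := by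
  rw [← ker_comp_of_ker_eq_bot f' (ker_eq_bot_of_injective hg'), hcomm, ker_comp]

theorem LinearMap.range_le_comap_range_of_comp_eq (hcomm : g'.comp f' = f.comp g) :
    range f' ≤ (range f).comap g' := by
  rw [← Submodule.map_le_iff_le_comap, ← range_comp, hcomm]
  exact range_comp_le_range g f

end Square

section ShortExactSequence

variable {R : Type*} [Semiring R] {A' A A'' : ℕ → Type*}
  [∀ n, AddCommMonoid (A' n)] [∀ n, Module R (A' n)]
  [∀ n, AddCommMonoid (A n)] [∀ n, Module R (A n)]
  [∀ n, AddCommMonoid (A'' n)] [∀ n, Module R (A'' n)]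
  {a' : ∀ n m, n ≤ m → (A' n →ₗ[R] A' m)} {a : ∀ n m, n ≤ m → (A n →ₗ[R] A m)}
  {a'' : ∀ n m, n ≤ m → (A'' n →ₗ[R] A'' m)}
  {u : ∀ n, A' n →ₗ[R] A n} {v : ∀ n, A n →ₗ[R] A'' n}

theorem comap_range_le_range_of_ker_eq
    (ha_comp : ∀ n m k (h₁ : n ≤ m) (h₂ : m ≤ k),
      (a m k h₂).comp (a n m h₁) = a n k (h₁.trans h₂))
    (hu_comm : ∀ n m (h : n ≤ m), (u m).comp (a' n m h) = (a n m h).comp (u n))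
    (hv_comm : ∀ n m (h : n ≤ m), (v m).comp (a n m h) = (a'' n m h).comp (v n))
    (hu_inj : ∀ n, Function.Injective (u n))
    (hexact : ∀ n, range (u n) = ker (v n))
    {N M k : ℕ} (hNM : N ≤ M) (hMk : M ≤ k)
    (hker : ker (a'' N M hNM) = ker (a'' N k (hNM.trans hMk))) :
    (range (a N k (hNM.trans hMk))).comap (u k) ≤ range (a' M k hMk) := by
  rintro x ⟨y, hy⟩
  have hvy : v N y ∈ ker (a'' N M hNM) := by
    rw [hker, mem_ker, ← comp_apply, ← hv_comm, comp_apply, hy, ← mem_ker, ← hexact]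
    exact mem_range_self _ x
  obtain ⟨z, hz⟩ : a N M hNM y ∈ range (u M) := by
    rw [hexact, mem_ker, ← comp_apply, hv_comm, comp_apply]
    exact hvy
  refine ⟨z, hu_inj k ?_⟩
  rw [← comp_apply, hu_comm, comp_apply, hz, ← comp_apply, ha_comp, hy]

end ShortExactSequence

theorem stmt0_general {R : Type*} [CommRing R]
    (A' A A'' : ℕ → Type*)
    [∀ n, AddCommGroup (A' n)] [∀ n, Module R (A' n)]
    [∀ n, AddCommGroup (A n)] [∀ n, Module R (A n)]
    [∀ n, AddCommGroup (A'' n)] [∀ n, Module R (A'' n)]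
    (a' : ∀ n m, n ≤ m → (A' n →ₗ[R] A' m))
    (a : ∀ n m, n ≤ m → (A n →ₗ[R] A m))
    (a'' : ∀ n m, n ≤ m → (A'' n →ₗ[R] A'' m))
    (ha'_comp : ∀ n m k (h₁ : n ≤ m) (h₂ : m ≤ k),
      (a' m k h₂).comp (a' n m h₁) = a' n k (h₁.trans h₂))
    (ha_comp : ∀ n m k (h₁ : n ≤ m) (h₂ : m ≤ k),
      (a m k h₂).comp (a n m h₁) = a n k (h₁.trans h₂))
    (u : ∀ n, A' n →ₗ[R] A n) (v : ∀ n, A n →ₗ[R] A'' n)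
    (hu_comm : ∀ n m (h : n ≤ m), (u m).comp (a' n m h) = (a n m h).comp (u n))
    (hv_comm : ∀ n m (h : n ≤ m), (v m).comp (a n m h) = (a'' n m h).comp (v n))
    (hu_inj : ∀ n, Function.Injective (u n))
    (hexact : ∀ n, LinearMap.range (u n) = LinearMap.ker (v n))
    (N N'' : ℕ) (φ φ'' : ℕ → ℕ)
    (hA : IsEssentiallyConstant A a N φ)
    (hA'' : IsEssentiallyConstant A'' a'' N'' φ'') :
    IsEssentiallyConstant A' a' (φ'' N) φ := by
  obtain ⟨hφ, hker, him⟩ := hA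
  obtain ⟨hφ'', hker'', -⟩ := hA''
  have hker' n m (h : n ≤ m) : ker (a' n m h) = (ker (a n m h)).comap (u n) :=
    ker_eq_comap_ker_of_comp_eq (hu_inj m) (hu_comm n m h)
  refine ⟨hφ, fun j k h₁ h₂ hk => ?_, fun j hj h₁ h₂ => le_antisymm ?_ ?_⟩
  · rw [hker', hker', hker j k h₁ h₂ hk]
  · rw [← ha'_comp _ _ _ hj h₂]
    exact range_comp_le_range _ _
  · have hNj : N ≤ j := (hφ'' N).trans hj
    calc range (a' j (φ j) h₂)
        ≤ (range (a j (φ j) h₂)).comap (u (φ j)) :=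
          range_le_comap_range_of_comp_eq (hu_comm j (φ j) h₂)
      _ = (range (a N (φ j) (hNj.trans h₂))).comap (u (φ j)) := by rw [him j hNj]
      _ ≤ range (a' (φ'' N) (φ j) h₁) :=
          comap_range_le_range_of_ker_eq ha_comp hu_comm hv_comm hu_inj hexact (hφ'' N) h₁
            (hker'' N (φ j) (hφ'' N) _ h₁)

/-- One direction of Proposition 5.6: in a short exact sequence of inductive systems
`0 → A' → A → A'' → 0`, if `A` is `(N, φ)`-essentially constant and `A''` is
`(N'', φ'')`-essentially constant, then `A'` is `(φ''(N), φ)`-essentially constant. -/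
theorem stmt0 {R : Type*} [CommRing R]
    (A' A A'' : ℕ → Type*)
    [∀ n, AddCommGroup (A' n)] [∀ n, Module R (A' n)]
    [∀ n, AddCommGroup (A n)] [∀ n, Module R (A n)]
    [∀ n, AddCommGroup (A'' n)] [∀ n, Module R (A'' n)]
    (a' : ∀ n m, n ≤ m → (A' n →ₗ[R] A' m))
    (a : ∀ n m, n ≤ m → (A n →ₗ[R] A m))
    (a'' : ∀ n m, n ≤ m → (A'' n →ₗ[R] A'' m))
    (ha'_id : ∀ n, a' n n le_rfl = LinearMap.id)
    (ha_id : ∀ n, a n n le_rfl = LinearMap.id)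
    (ha''_id : ∀ n, a'' n n le_rfl = LinearMap.id)
    (ha'_comp : ∀ n m k (h₁ : n ≤ m) (h₂ : m ≤ k),
      (a' m k h₂).comp (a' n m h₁) = a' n k (h₁.trans h₂))
    (ha_comp : ∀ n m k (h₁ : n ≤ m) (h₂ : m ≤ k),
      (a m k h₂).comp (a n m h₁) = a n k (h₁.trans h₂))
    (ha''_comp : ∀ n m k (h₁ : n ≤ m) (h₂ : m ≤ k),
      (a'' m k h₂).comp (a'' n m h₁) = a'' n k (h₁.trans h₂))
    (u : ∀ n, A' n →ₗ[R] A n) (v : ∀ n, A n →ₗ[R] A'' n)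
    (hu_comm : ∀ n m (h : n ≤ m), (u m).comp (a' n m h) = (a n m h).comp (u n))
    (hv_comm : ∀ n m (h : n ≤ m), (v m).comp (a n m h) = (a'' n m h).comp (v n))
    (hu_inj : ∀ n, Function.Injective (u n))
    (hv_surj : ∀ n, Function.Surjective (v n))
    (hexact : ∀ n, LinearMap.range (u n) = LinearMap.ker (v n))
    (N N'' : ℕ) (φ φ'' : ℕ → ℕ)
    (hA : IsEssentiallyConstant A a N φ)
    (hA'' : IsEssentiallyConstant A'' a'' N'' φ'') :
    IsEssentiallyConstant A' a' (φ'' N) φ :=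
  stmt0_general A' A A'' a' a a'' ha'_comp ha_comp u v hu_comm hv_comm hu_inj hexact N N'' φ φ'' hA
    hA''
end

section
/- Let R be a commutative ring and let 0 → A'_• → A_• → A''_• → 0 be a short exact sequence of inductive systems of R-modules indexed by ℕ. If the system (A'_n) is (N',φ')-essentially constant and the system (A''_n) is (N'',φ'')-essentially constant, then the system (A_n) is (max(N',N''), φ'∘φ'')-essentially constant. (This is one direction of Proposition 5.6 of the paper, with the explicit constants produced by its proof.) -/
section System

open LinearMap

variable {R : Type*} [CommRing R] {A : ℕ → Type*}
    [∀ n, AddCommGroup (A n)] [∀ n, Module R (A n)]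

def TransitionsCompose (a : ∀ n m, n ≤ m → (A n →ₗ[R] A m)) : Prop :=
  ∀ n m k (h₁ : n ≤ m) (h₂ : m ≤ k), (a m k h₂).comp (a n m h₁) = a n k (h₁.trans h₂)

variable {a : ∀ n m, n ≤ m → (A n →ₗ[R] A m)}

theorem TransitionsCompose.apply_apply (ha : TransitionsCompose a) {n m k : ℕ}
    (h₁ : n ≤ m) (h₂ : m ≤ k) (x : A n) :
    a m k h₂ (a n m h₁ x) = a n k (h₁.trans h₂) x :=
  LinearMap.congr_fun (ha n m k h₁ h₂) x

theorem TransitionsCompose.ker_mono (ha : TransitionsCompose a) {n m k : ℕ}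
    (h₁ : n ≤ m) (h₂ : m ≤ k) : ker (a n m h₁) ≤ ker (a n k (h₁.trans h₂)) := by
  intro x hx
  rw [mem_ker, ← ha.apply_apply h₁ h₂, mem_ker.mp hx, map_zero]

theorem TransitionsCompose.range_mono (ha : TransitionsCompose a) {n m k : ℕ}
    (h₁ : n ≤ m) (h₂ : m ≤ k) : range (a n k (h₁.trans h₂)) ≤ range (a m k h₂) := by
  rintro _ ⟨x, rfl⟩
  exact ⟨a n m h₁ x, ha.apply_apply h₁ h₂ x⟩

variable {N : ℕ} {φ : ℕ → ℕ}

theorem IsEssentiallyConstant.ker_le (hA : IsEssentiallyConstant A a N φ) {j k : ℕ}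
    (hk : φ j ≤ k) :
    ker (a j k ((hA.1 j).trans hk)) ≤ ker (a j (φ j) (hA.1 j)) :=
  (hA.2.1 j k _ _ hk).ge

theorem IsEssentiallyConstant.range_le (hA : IsEssentiallyConstant A a N φ)
    (ha : TransitionsCompose a) {M j : ℕ} (hNM : N ≤ M) (hMj : M ≤ j) :
    range (a j (φ j) (hA.1 j)) ≤ range (a M (φ j) (hMj.trans (hA.1 j))) := by
  rw [← hA.2.2 j (hNM.trans hMj) ((hNM.trans hMj).trans (hA.1 j))]
  exact ha.range_mono hNM _

end System

section Morphism

variable {R : Type*} [CommRing R] {A B : ℕ → Type*}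
    [∀ n, AddCommGroup (A n)] [∀ n, Module R (A n)]
    [∀ n, AddCommGroup (B n)] [∀ n, Module R (B n)]

def CommutesWithTransitions (a : ∀ n m, n ≤ m → (A n →ₗ[R] A m))
    (b : ∀ n m, n ≤ m → (B n →ₗ[R] B m)) (f : ∀ n, A n →ₗ[R] B n) : Prop :=
  ∀ n m (h : n ≤ m), (f m).comp (a n m h) = (b n m h).comp (f n)

theorem CommutesWithTransitions.apply {a : ∀ n m, n ≤ m → (A n →ₗ[R] A m)}
    {b : ∀ n m, n ≤ m → (B n →ₗ[R] B m)} {f : ∀ n, A n →ₗ[R] B n}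
    (hf : CommutesWithTransitions a b f) {n m : ℕ} (h : n ≤ m) (x : A n) :
    f m (a n m h x) = b n m h (f n x) :=
  LinearMap.congr_fun (hf n m h) x

end Morphism

section ShortExact

open LinearMap

variable {R : Type*} [CommRing R] {A' A A'' : ℕ → Type*}
    [∀ n, AddCommGroup (A' n)] [∀ n, Module R (A' n)]
    [∀ n, AddCommGroup (A n)] [∀ n, Module R (A n)]
    [∀ n, AddCommGroup (A'' n)] [∀ n, Module R (A'' n)]
    {a' : ∀ n m, n ≤ m → (A' n →ₗ[R] A' m)} {a : ∀ n m, n ≤ m → (A n →ₗ[R] A m)}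
    {a'' : ∀ n m, n ≤ m → (A'' n →ₗ[R] A'' m)}
    {u : ∀ n, A' n →ₗ[R] A n} {v : ∀ n, A n →ₗ[R] A'' n}

theorem ker_le_ker_of_shortExact (ha : TransitionsCompose a)
    (hu : CommutesWithTransitions a' a u) (hv : CommutesWithTransitions a a'' v)
    (hu_inj : ∀ n, Function.Injective (u n))
    (hexact : ∀ n, range (u n) = ker (v n))
    {j m p k : ℕ} (hjm : j ≤ m) (hmp : m ≤ p) (hmk : m ≤ k)
    (h'' : ker (a'' j k (hjm.trans hmk)) ≤ ker (a'' j m hjm))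
    (h' : ker (a' m k hmk) ≤ ker (a' m p hmp)) :
    ker (a j k (hjm.trans hmk)) ≤ ker (a j p (hjm.trans hmp)) := by
  intro x hx
  rw [mem_ker] at hx ⊢
  have hvx : a'' j m hjm (v j x) = 0 := h'' <| by
    rw [mem_ker, ← hv.apply, hx, map_zero]
  obtain ⟨y, hy⟩ : a j m hjm x ∈ range (u m) := by
    rw [hexact, mem_ker, hv.apply, hvx]
  have hy_dies : a' m p hmp y = 0 := h' <| by
    refine mem_ker.mpr (hu_inj k ?_)
    rw [hu.apply, hy, ha.apply_apply, hx, map_zero]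
  rw [← ha.apply_apply hjm hmp, ← hy, ← hu.apply, hy_dies, map_zero]

theorem range_le_range_of_shortExact (ha : TransitionsCompose a)
    (hu : CommutesWithTransitions a' a u) (hv : CommutesWithTransitions a a'' v)
    (hv_surj : ∀ n, Function.Surjective (v n))
    (hexact : ∀ n, range (u n) = ker (v n))
    {N j m p : ℕ} (hNm : N ≤ m) (hjm : j ≤ m) (hmp : m ≤ p)
    (h'' : range (a'' j m hjm) ≤ range (a'' N m hNm))
    (h' : range (a' m p hmp) ≤ range (a' N p (hNm.trans hmp))) :
    range (a j p (hjm.trans hmp)) ≤ range (a N p (hNm.trans hmp)) := by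
  rintro _ ⟨x, rfl⟩
  obtain ⟨w, hw⟩ := h'' ⟨v j x, rfl⟩
  obtain ⟨z, rfl⟩ := hv_surj N w
  obtain ⟨y, hy⟩ : a j m hjm x - a N m hNm z ∈ range (u m) := by
    rw [hexact, mem_ker, map_sub, hv.apply, hv.apply, hw, sub_self]
  obtain ⟨y', hy'⟩ := h' ⟨y, rfl⟩
  refine ⟨z + u N y', ?_⟩
  calc a N p _ (z + u N y')
      = a N p _ z + u p (a' m p hmp y) := by rw [map_add, ← hu.apply, hy']
    _ = a N p _ z + a m p hmp (a j m hjm x - a N m hNm z) := by rw [hu.apply, hy]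
    _ = a j p _ x := by rw [map_sub, ha.apply_apply, ha.apply_apply]; abel

end ShortExact

theorem stmt2_general {R : Type*} [CommRing R]
    (A' A A'' : ℕ → Type*)
    [∀ n, AddCommGroup (A' n)] [∀ n, Module R (A' n)]
    [∀ n, AddCommGroup (A n)] [∀ n, Module R (A n)]
    [∀ n, AddCommGroup (A'' n)] [∀ n, Module R (A'' n)]
    (a' : ∀ n m, n ≤ m → (A' n →ₗ[R] A' m))
    (a : ∀ n m, n ≤ m → (A n →ₗ[R] A m))
    (a'' : ∀ n m, n ≤ m → (A'' n →ₗ[R] A'' m))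
    (ha'_comp : ∀ n m k (h₁ : n ≤ m) (h₂ : m ≤ k),
      (a' m k h₂).comp (a' n m h₁) = a' n k (h₁.trans h₂))
    (ha_comp : ∀ n m k (h₁ : n ≤ m) (h₂ : m ≤ k),
      (a m k h₂).comp (a n m h₁) = a n k (h₁.trans h₂))
    (ha''_comp : ∀ n m k (h₁ : n ≤ m) (h₂ : m ≤ k),
      (a'' m k h₂).comp (a'' n m h₁) = a'' n k (h₁.trans h₂))
    (u : ∀ n, A' n →ₗ[R] A n) (v : ∀ n, A n →ₗ[R] A'' n)
    (hu_comm : ∀ n m (h : n ≤ m), (u m).comp (a' n m h) = (a n m h).comp (u n))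
    (hv_comm : ∀ n m (h : n ≤ m), (v m).comp (a n m h) = (a'' n m h).comp (v n))
    (hu_inj : ∀ n, Function.Injective (u n))
    (hv_surj : ∀ n, Function.Surjective (v n))
    (hexact : ∀ n, LinearMap.range (u n) = LinearMap.ker (v n))
    (N' N'' : ℕ) (φ' φ'' : ℕ → ℕ)
    (hA' : IsEssentiallyConstant A' a' N' φ')
    (hA'' : IsEssentiallyConstant A'' a'' N'' φ'') :
    IsEssentiallyConstant A a (max N' N'') (φ' ∘ φ'') := by
  have hjm j : j ≤ φ'' j := hA''.1 j
  have hmp j : φ'' j ≤ φ' (φ'' j) := hA'.1 (φ'' j)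
  refine ⟨fun j => (hjm j).trans (hmp j), fun j k _ _ hk => ?_, fun j hNj _ _ => ?_⟩
  · have hmk := (hmp j).trans hk
    exact le_antisymm (TransitionsCompose.ker_mono ha_comp _ hk)
      (ker_le_ker_of_shortExact ha_comp hu_comm hv_comm hu_inj hexact (hjm j) (hmp j) hmk
        (hA''.ker_le hmk) (hA'.ker_le hk))
  · have hNm := hNj.trans (hjm j)
    exact le_antisymm (TransitionsCompose.range_mono ha_comp hNj _)
      (range_le_range_of_shortExact ha_comp hu_comm hv_comm hv_surj hexact hNm (hjm j) (hmp j)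
        (hA''.range_le ha''_comp (le_max_right N' N'') hNj)
        (hA'.range_le ha'_comp (le_max_left N' N'') hNm))

/-- One direction of Proposition 5.6: in a short exact sequence of inductive systems
`0 → A' → A → A'' → 0`, if `A'` is `(N', φ')`-essentially constant and `A''` is
`(N'', φ'')`-essentially constant, then `A` is `(max N' N'', φ' ∘ φ'')`-essentially
constant. -/
theorem stmt2 {R : Type*} [CommRing R]
    (A' A A'' : ℕ → Type*)
    [∀ n, AddCommGroup (A' n)] [∀ n, Module R (A' n)]
    [∀ n, AddCommGroup (A n)] [∀ n, Module R (A n)]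
    [∀ n, AddCommGroup (A'' n)] [∀ n, Module R (A'' n)]
    (a' : ∀ n m, n ≤ m → (A' n →ₗ[R] A' m))
    (a : ∀ n m, n ≤ m → (A n →ₗ[R] A m))
    (a'' : ∀ n m, n ≤ m → (A'' n →ₗ[R] A'' m))
    (ha'_id : ∀ n, a' n n le_rfl = LinearMap.id)
    (ha_id : ∀ n, a n n le_rfl = LinearMap.id)
    (ha''_id : ∀ n, a'' n n le_rfl = LinearMap.id)
    (ha'_comp : ∀ n m k (h₁ : n ≤ m) (h₂ : m ≤ k),
      (a' m k h₂).comp (a' n m h₁) = a' n k (h₁.trans h₂))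
    (ha_comp : ∀ n m k (h₁ : n ≤ m) (h₂ : m ≤ k),
      (a m k h₂).comp (a n m h₁) = a n k (h₁.trans h₂))
    (ha''_comp : ∀ n m k (h₁ : n ≤ m) (h₂ : m ≤ k),
      (a'' m k h₂).comp (a'' n m h₁) = a'' n k (h₁.trans h₂))
    (u : ∀ n, A' n →ₗ[R] A n) (v : ∀ n, A n →ₗ[R] A'' n)
    (hu_comm : ∀ n m (h : n ≤ m), (u m).comp (a' n m h) = (a n m h).comp (u n))
    (hv_comm : ∀ n m (h : n ≤ m), (v m).comp (a n m h) = (a'' n m h).comp (v n))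
    (hu_inj : ∀ n, Function.Injective (u n))
    (hv_surj : ∀ n, Function.Surjective (v n))
    (hexact : ∀ n, LinearMap.range (u n) = LinearMap.ker (v n))
    (N' N'' : ℕ) (φ' φ'' : ℕ → ℕ)
    (hA' : IsEssentiallyConstant A' a' N' φ')
    (hA'' : IsEssentiallyConstant A'' a'' N'' φ'') :
    IsEssentiallyConstant A a (max N' N'') (φ' ∘ φ'') :=
  stmt2_general A' A A'' a' a a'' ha'_comp ha_comp ha''_comp u v hu_comm hv_comm hu_inj hv_surj
    hexact N' N'' φ' φ'' hA' hA''
end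

section
/- (Proposition 5.9.) Let R be a commutative ring, let A_• and B_• be inductive systems of R-modules indexed by ℕ, let u_• : A_• → B_• be a morphism of inductive systems (R-linear maps u_n : A_n → B_n commuting with the transition maps), and let τ : ℕ → ℕ be a strictly increasing function. Suppose there are R-linear maps h_n : B_n → A_{τ(n)} such that for every n: h_n ∘ u_n equals the transition map A_n → A_{τ(n)}, and u_{τ(n)} ∘ h_n equals the transition map B_n → B_{τ(n)}. If B_• is (N,φ)-essentially constant, then A_• is (τ(N), τ∘φ)-essentially constant. -/
/-! The maps `h n` make `u` invertible up to a shift by `τ`: every transition map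
`a_{j,τ(m)}` factors as `h_m ∘ b_{j,m} ∘ u_j`, and `a_{τ(n),τ(m)} ∘ h_n = h_m ∘ b_{n,m}`.
Through the first factorisation, kernels and images of transition maps of `A` are controlled
by those of `B`, so the stabilisation of kernels and images in `B` transfers to `A`. -/

section ShiftedInverse

variable {R : Type*} [CommRing R] {A B : ℕ → Type*}
  [∀ n, AddCommGroup (A n)] [∀ n, Module R (A n)]
  [∀ n, AddCommGroup (B n)] [∀ n, Module R (B n)]
  {a : ∀ n m, n ≤ m → (A n →ₗ[R] A m)} {b : ∀ n m, n ≤ m → (B n →ₗ[R] B m)}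
  {u : ∀ n, A n →ₗ[R] B n} {τ : ℕ → ℕ} {h : ∀ n, B n →ₗ[R] A (τ n)}

theorem transition_eq_shiftedInverse_comp
    (ha_comp : ∀ n m k (h₁ : n ≤ m) (h₂ : m ≤ k),
      (a m k h₂).comp (a n m h₁) = a n k (h₁.trans h₂))
    (hu_comm : ∀ n m (h : n ≤ m), (u m).comp (a n m h) = (b n m h).comp (u n))
    (hh₁ : ∀ n (hn : n ≤ τ n), (h n).comp (u n) = a n (τ n) hn)
    {j m : ℕ} (hjm : j ≤ m) (hmτ : m ≤ τ m) :
    a j (τ m) (hjm.trans hmτ) = (h m).comp ((b j m hjm).comp (u j)) := by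
  rw [← ha_comp j m (τ m) hjm hmτ, ← hh₁ m hmτ, LinearMap.comp_assoc, hu_comm]

theorem transition_comp_shiftedInverse
    (ha_comp : ∀ n m k (h₁ : n ≤ m) (h₂ : m ≤ k),
      (a m k h₂).comp (a n m h₁) = a n k (h₁.trans h₂))
    (hb_comp : ∀ n m k (h₁ : n ≤ m) (h₂ : m ≤ k),
      (b m k h₂).comp (b n m h₁) = b n k (h₁.trans h₂))
    (hu_comm : ∀ n m (h : n ≤ m), (u m).comp (a n m h) = (b n m h).comp (u n))
    (hh₁ : ∀ n (hn : n ≤ τ n), (h n).comp (u n) = a n (τ n) hn)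
    (hh₂ : ∀ n (hn : n ≤ τ n), (u (τ n)).comp (h n) = b n (τ n) hn)
    {n m : ℕ} (hnτ : n ≤ τ n) (hτm : τ n ≤ m) (hmτ : m ≤ τ m) :
    (a (τ n) (τ m) (hτm.trans hmτ)).comp (h n) = (h m).comp (b n m (hnτ.trans hτm)) := by
  rw [transition_eq_shiftedInverse_comp ha_comp hu_comm hh₁ hτm hmτ, LinearMap.comp_assoc,
    LinearMap.comp_assoc, hh₂ n hnτ, hb_comp]

theorem ker_transition_le_of_ker_le
    (ha_comp : ∀ n m k (h₁ : n ≤ m) (h₂ : m ≤ k),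
      (a m k h₂).comp (a n m h₁) = a n k (h₁.trans h₂))
    (hu_comm : ∀ n m (h : n ≤ m), (u m).comp (a n m h) = (b n m h).comp (u n))
    (hh₁ : ∀ n (hn : n ≤ τ n), (h n).comp (u n) = a n (τ n) hn)
    {j m k : ℕ} (hjm : j ≤ m) (hmτ : m ≤ τ m) (hjk : j ≤ k)
    (hB : LinearMap.ker (b j k hjk) ≤ LinearMap.ker (b j m hjm)) :
    LinearMap.ker (a j k hjk) ≤ LinearMap.ker (a j (τ m) (hjm.trans hmτ)) :=
  calc LinearMap.ker (a j k hjk)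
      ≤ LinearMap.ker ((u k).comp (a j k hjk)) := LinearMap.ker_le_ker_comp _ _
    _ = (LinearMap.ker (b j k hjk)).comap (u j) := by rw [hu_comm, LinearMap.ker_comp]
    _ ≤ (LinearMap.ker (b j m hjm)).comap (u j) := Submodule.comap_mono hB
    _ = LinearMap.ker ((b j m hjm).comp (u j)) := (LinearMap.ker_comp _ _).symm
    _ ≤ LinearMap.ker ((h m).comp ((b j m hjm).comp (u j))) := LinearMap.ker_le_ker_comp _ _
    _ = LinearMap.ker (a j (τ m) (hjm.trans hmτ)) := by
      rw [transition_eq_shiftedInverse_comp ha_comp hu_comm hh₁ hjm hmτ]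

theorem range_transition_le_of_range_le
    (ha_comp : ∀ n m k (h₁ : n ≤ m) (h₂ : m ≤ k),
      (a m k h₂).comp (a n m h₁) = a n k (h₁.trans h₂))
    (hb_comp : ∀ n m k (h₁ : n ≤ m) (h₂ : m ≤ k),
      (b m k h₂).comp (b n m h₁) = b n k (h₁.trans h₂))
    (hu_comm : ∀ n m (h : n ≤ m), (u m).comp (a n m h) = (b n m h).comp (u n))
    (hh₁ : ∀ n (hn : n ≤ τ n), (h n).comp (u n) = a n (τ n) hn)
    (hh₂ : ∀ n (hn : n ≤ τ n), (u (τ n)).comp (h n) = b n (τ n) hn)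
    {n j m : ℕ} (hnτ : n ≤ τ n) (hτm : τ n ≤ m) (hjm : j ≤ m) (hmτ : m ≤ τ m)
    (hB : LinearMap.range (b j m hjm) ≤ LinearMap.range (b n m (hnτ.trans hτm))) :
    LinearMap.range (a j (τ m) (hjm.trans hmτ)) ≤
      LinearMap.range (a (τ n) (τ m) (hτm.trans hmτ)) :=
  calc LinearMap.range (a j (τ m) (hjm.trans hmτ))
      = LinearMap.range ((h m).comp ((b j m hjm).comp (u j))) := by
        rw [transition_eq_shiftedInverse_comp ha_comp hu_comm hh₁ hjm hmτ]
    _ ≤ LinearMap.range ((h m).comp (b j m hjm)) := by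
        rw [← LinearMap.comp_assoc]
        exact LinearMap.range_comp_le_range _ _
    _ = (LinearMap.range (b j m hjm)).map (h m) := LinearMap.range_comp _ _
    _ ≤ (LinearMap.range (b n m (hnτ.trans hτm))).map (h m) := Submodule.map_mono hB
    _ = LinearMap.range ((a (τ n) (τ m) (hτm.trans hmτ)).comp (h n)) := by
        rw [← LinearMap.range_comp,
          transition_comp_shiftedInverse ha_comp hb_comp hu_comm hh₁ hh₂ hnτ hτm hmτ]
    _ ≤ LinearMap.range (a (τ n) (τ m) (hτm.trans hmτ)) := LinearMap.range_comp_le_range _ _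

end ShiftedInverse

theorem stmt3_general {R : Type*} [CommRing R]
    (A B : ℕ → Type*)
    [∀ n, AddCommGroup (A n)] [∀ n, Module R (A n)]
    [∀ n, AddCommGroup (B n)] [∀ n, Module R (B n)]
    (a : ∀ n m, n ≤ m → (A n →ₗ[R] A m))
    (b : ∀ n m, n ≤ m → (B n →ₗ[R] B m))
    (ha_comp : ∀ n m k (h₁ : n ≤ m) (h₂ : m ≤ k),
      (a m k h₂).comp (a n m h₁) = a n k (h₁.trans h₂))
    (hb_comp : ∀ n m k (h₁ : n ≤ m) (h₂ : m ≤ k),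
      (b m k h₂).comp (b n m h₁) = b n k (h₁.trans h₂))
    (u : ∀ n, A n →ₗ[R] B n)
    (hu_comm : ∀ n m (h : n ≤ m), (u m).comp (a n m h) = (b n m h).comp (u n))
    (τ : ℕ → ℕ) (hτ : StrictMono τ)
    (h : ∀ n, B n →ₗ[R] A (τ n))
    (hh₁ : ∀ n (hn : n ≤ τ n), (h n).comp (u n) = a n (τ n) hn)
    (hh₂ : ∀ n (hn : n ≤ τ n), (u (τ n)).comp (h n) = b n (τ n) hn)
    (N : ℕ) (φ : ℕ → ℕ)
    (hB : IsEssentiallyConstant B b N φ) :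
    IsEssentiallyConstant A a (τ N) (τ ∘ φ) := by
  obtain ⟨hφ, hker, hran⟩ := hB
  have hτ_le (n : ℕ) : n ≤ τ n := hτ.le_apply
  refine ⟨fun j => (hφ j).trans (hτ_le _), fun j k h₁ h₂ hk => le_antisymm ?_ ?_,
    fun j hj h₁ h₂ => le_antisymm ?_ ?_⟩
  · rw [← ha_comp j _ k h₁ hk]
    exact LinearMap.ker_le_ker_comp _ _
  · exact ker_transition_le_of_ker_le ha_comp hu_comm hh₁ (hφ j) (hτ_le _) h₂
      (hker j k (hφ j) h₂ ((hτ_le _).trans hk)).ge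
  · rw [← ha_comp _ j _ hj h₂]
    exact LinearMap.range_comp_le_range _ _
  · exact range_transition_le_of_range_le ha_comp hb_comp hu_comm hh₁ hh₂ (hτ_le N)
      (hj.trans (hφ j)) (hφ j) (hτ_le _) (hran j ((hτ_le N).trans hj) _ (hφ j)).ge

/-- Proposition 5.9: if a morphism `u : A → B` of inductive systems admits maps
`h n : B n → A (τ n)` (for a strictly increasing `τ`) making the two triangles commute,
and `B` is `(N, φ)`-essentially constant, then `A` is `(τ N, τ ∘ φ)`-essentially
constant. -/
theorem stmt3 {R : Type*} [CommRing R]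
    (A B : ℕ → Type*)
    [∀ n, AddCommGroup (A n)] [∀ n, Module R (A n)]
    [∀ n, AddCommGroup (B n)] [∀ n, Module R (B n)]
    (a : ∀ n m, n ≤ m → (A n →ₗ[R] A m))
    (b : ∀ n m, n ≤ m → (B n →ₗ[R] B m))
    (ha_id : ∀ n, a n n le_rfl = LinearMap.id)
    (hb_id : ∀ n, b n n le_rfl = LinearMap.id)
    (ha_comp : ∀ n m k (h₁ : n ≤ m) (h₂ : m ≤ k),
      (a m k h₂).comp (a n m h₁) = a n k (h₁.trans h₂))
    (hb_comp : ∀ n m k (h₁ : n ≤ m) (h₂ : m ≤ k),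
      (b m k h₂).comp (b n m h₁) = b n k (h₁.trans h₂))
    (u : ∀ n, A n →ₗ[R] B n)
    (hu_comm : ∀ n m (h : n ≤ m), (u m).comp (a n m h) = (b n m h).comp (u n))
    (τ : ℕ → ℕ) (hτ : StrictMono τ)
    (h : ∀ n, B n →ₗ[R] A (τ n))
    (hh₁ : ∀ n (hn : n ≤ τ n), (h n).comp (u n) = a n (τ n) hn)
    (hh₂ : ∀ n (hn : n ≤ τ n), (u (τ n)).comp (h n) = b n (τ n) hn)
    (N : ℕ) (φ : ℕ → ℕ)
    (hB : IsEssentiallyConstant B b N φ) :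
    IsEssentiallyConstant A a (τ N) (τ ∘ φ) :=
  stmt3_general A B a b ha_comp hb_comp u hu_comm τ hτ h hh₁ hh₂ N φ hB
end

section
/- (Comparison of the Frattini-iterated and ℓ-central filtrations, Remark 3.1.2, stated for finite ℓ-groups.) For every prime ℓ there exists a function τ : ℕ × ℕ → ℕ such that for every finite ℓ-group G generated by d elements and every n ≥ 1 one has F^{τ(d,n)}G ⊆ Φ^nG ⊆ F^nG, where F^• denotes the descending ℓ-central series of G and Φ^• the iterated Frattini-type series defined by Φ¹G = G and Φ^{n+1}G = the subgroup generated by the ℓ-th powers of elements of Φ^nG together with the commutators [x,y] for x, y ∈ Φ^nG. -/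
/-- One step of the descending `ℓ`-central series: the subgroup generated by the `ℓ`-th
powers of elements of `H` together with the commutators `[x, g] = x⁻¹g⁻¹xg` with `x ∈ H`
and `g ∈ G`. -/
def ellCentralStep (ℓ : ℕ) {G : Type*} [Group G] (H : Subgroup G) : Subgroup G :=
  Subgroup.closure
    ({y : G | ∃ x ∈ H, y = x ^ ℓ} ∪
     {y : G | ∃ x ∈ H, ∃ g : G, y = x⁻¹ * g⁻¹ * x * g})

/-- The descending `ℓ`-central series of `G`, numbered from `1`:
`F¹G = G` and `F^{n+1}G = (F^nG)^ℓ ⬝ (F^nG, G)`.  (The value at `0` is set to `⊤` by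
convention.) -/
def ellCentralSeries (ℓ : ℕ) (G : Type*) [Group G] : ℕ → Subgroup G
  | 0 => ⊤
  | 1 => ⊤
  | n + 2 => ellCentralStep ℓ (ellCentralSeries ℓ G (n + 1))

/-- One step of the iterated Frattini-type series: the subgroup generated by the `ℓ`-th
powers of elements of `H` together with the commutators `[x, y]` with `x, y ∈ H`. -/
def frattiniStep (ℓ : ℕ) {G : Type*} [Group G] (H : Subgroup G) : Subgroup G :=
  Subgroup.closure
    ({y : G | ∃ x ∈ H, y = x ^ ℓ} ∪
     {y : G | ∃ x ∈ H, ∃ g ∈ H, y = x⁻¹ * g⁻¹ * x * g})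

/-- The iterated Frattini-type series of `G`, numbered from `1`: `Φ¹G = G` and
`Φ^{n+1}G = (Φ^nG)^ℓ ⬝ (Φ^nG, Φ^nG)`.  (The value at `0` is set to `⊤` by convention.) -/
def frattiniSeries (ℓ : ℕ) (G : Type*) [Group G] : ℕ → Subgroup G
  | 0 => ⊤
  | 1 => ⊤
  | n + 2 => frattiniStep ℓ (frattiniSeries ℓ G (n + 1))

/-!
The inclusion `Φⁿ ≤ Fⁿ` is immediate by induction. For the other one, `Φⁿ/Φⁿ⁺¹` is abelian of
exponent `ℓ` and, by Schreier, generated by at most `[G : Φⁿ] * d` elements, so `[G : Φⁿ]` is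
bounded by a function of `ℓ`, `d` and `n` alone. In a finite `ℓ`-group `Q` the `ℓ`-central series
strictly decreases until it reaches `⊥`: a normal subgroup `H` with `H = H^ℓ [H, Q]` is central and
`ℓ`-divisible modulo `[H, Q]`, hence lies in `[H, Q]`, hence is trivial as `Q` is nilpotent.
Thus `F^{|Q|} Q = ⊥`, and applying this to `Q = G ⧸ Φⁿ` gives `F^τ G ≤ Φⁿ`.
-/

open Subgroup

section Steps

variable {ℓ : ℕ} {G Q : Type*} [Group G] [Group Q]

theorem ellCentralStep_mono {H K : Subgroup G} (h : H ≤ K) :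
    ellCentralStep ℓ H ≤ ellCentralStep ℓ K := by
  refine closure_mono (Set.union_subset_union ?_ ?_)
  · rintro y ⟨x, hx, rfl⟩
    exact ⟨x, h hx, rfl⟩
  · rintro y ⟨x, hx, g, rfl⟩
    exact ⟨x, h hx, g, rfl⟩

theorem frattiniStep_le_ellCentralStep (H : Subgroup G) :
    frattiniStep ℓ H ≤ ellCentralStep ℓ H := by
  refine closure_mono (Set.union_subset_union_right _ ?_)
  rintro y ⟨x, hx, g, -, rfl⟩
  exact ⟨x, hx, g, rfl⟩

theorem frattiniStep_le (H : Subgroup G) : frattiniStep ℓ H ≤ H := by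
  rw [frattiniStep, closure_le]
  rintro y (⟨x, hx, rfl⟩ | ⟨x, hx, g, hg, rfl⟩)
  · exact pow_mem hx ℓ
  · exact mul_mem (mul_mem (mul_mem (inv_mem hx) (inv_mem hg)) hx) hg

theorem ellCentralStep_le (H : Subgroup G) [H.Normal] : ellCentralStep ℓ H ≤ H := by
  rw [ellCentralStep, closure_le]
  rintro y (⟨x, hx, rfl⟩ | ⟨x, hx, g, rfl⟩)
  · exact pow_mem hx ℓ
  · rw [mul_assoc _ x, mul_assoc x⁻¹, ← mul_assoc g⁻¹]
    exact mul_mem (inv_mem hx) (by simpa using Normal.conj_mem ‹_› x hx g⁻¹)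

theorem map_ellCentralStep_le (f : G →* Q) (H : Subgroup G) :
    (ellCentralStep ℓ H).map f ≤ ellCentralStep ℓ (H.map f) := by
  rw [ellCentralStep, MonoidHom.map_closure]
  refine closure_mono ?_
  rintro y ⟨z, ⟨x, hx, rfl⟩ | ⟨x, hx, g, rfl⟩, rfl⟩
  · exact Or.inl ⟨f x, mem_map_of_mem f hx, map_pow f x ℓ⟩
  · exact Or.inr ⟨f x, mem_map_of_mem f hx, f g, by simp⟩

theorem map_frattiniStep_le (f : G →* Q) (H : Subgroup G) :
    (frattiniStep ℓ H).map f ≤ frattiniStep ℓ (H.map f) := by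
  rw [frattiniStep, MonoidHom.map_closure]
  refine closure_mono ?_
  rintro y ⟨z, ⟨x, hx, rfl⟩ | ⟨x, hx, g, hg, rfl⟩, rfl⟩
  · exact Or.inl ⟨f x, mem_map_of_mem f hx, map_pow f x ℓ⟩
  · exact Or.inr ⟨f x, mem_map_of_mem f hx, f g, mem_map_of_mem f hg, by simp⟩

instance ellCentralStep_characteristic (H : Subgroup G) [hH : H.Characteristic] :
    (ellCentralStep ℓ H).Characteristic := by
  rw [characteristic_iff_map_eq] at hH
  rw [characteristic_iff_map_le]
  intro ϕ
  simpa only [hH ϕ] using map_ellCentralStep_le ϕ.toMonoidHom H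

instance frattiniStep_characteristic (H : Subgroup G) [hH : H.Characteristic] :
    (frattiniStep ℓ H).Characteristic := by
  rw [characteristic_iff_map_eq] at hH
  rw [characteristic_iff_map_le]
  intro ϕ
  simpa only [hH ϕ] using map_frattiniStep_le ϕ.toMonoidHom H

end Steps

section Series

variable {ℓ : ℕ} {G Q : Type*} [Group G] [Group Q]

instance ellCentralSeries_characteristic :
    (n : ℕ) → (ellCentralSeries ℓ G n).Characteristic
  | 0 | 1 => topCharacteristic
  | n + 2 => have := ellCentralSeries_characteristic (n + 1)
      ellCentralStep_characteristic _

instance frattiniSeries_characteristic :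
    (n : ℕ) → (frattiniSeries ℓ G n).Characteristic
  | 0 | 1 => topCharacteristic
  | n + 2 => have := frattiniSeries_characteristic (n + 1)
      frattiniStep_characteristic _

theorem ellCentralSeries_antitone : Antitone (ellCentralSeries ℓ G) := by
  refine antitone_nat_of_succ_le fun n => ?_
  cases n with
  | zero => exact le_rfl
  | succ n => exact ellCentralStep_le _

theorem map_ellCentralSeries_le (f : G →* Q) :
    (n : ℕ) → (ellCentralSeries ℓ G n).map f ≤ ellCentralSeries ℓ Q n
  | 0 | 1 => le_top
  | n + 2 => (map_ellCentralStep_le f _).trans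
      (ellCentralStep_mono (map_ellCentralSeries_le f (n + 1)))

theorem frattiniSeries_le_ellCentralSeries :
    (n : ℕ) → frattiniSeries ℓ G n ≤ ellCentralSeries ℓ G n
  | 0 | 1 => le_rfl
  | n + 2 => (frattiniStep_le_ellCentralStep _).trans
      (ellCentralStep_mono (frattiniSeries_le_ellCentralSeries (n + 1)))

theorem frattiniStep_frattiniSeries_le (n : ℕ) :
    frattiniStep ℓ (frattiniSeries ℓ G n) ≤ frattiniSeries ℓ G (n + 1) := by
  cases n with
  | zero => exact le_top
  | succ n => exact le_rfl

end Series

section Vanishing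

variable {ℓ : ℕ} {G : Type*} [Group G]

theorem exists_pow_eq_of_mem_ellCentralStep {A : Subgroup G} (hA : A ≤ center G) {y : G}
    (hy : y ∈ ellCentralStep ℓ A) : ∃ x ∈ A, x ^ ℓ = y := by
  induction hy using closure_induction with
  | mem y hy =>
    rcases hy with ⟨x, hx, rfl⟩ | ⟨x, hx, g, rfl⟩
    · exact ⟨x, hx, rfl⟩
    · refine ⟨1, one_mem A, ?_⟩
      rw [one_pow, mul_assoc _ x, ← (mem_center_iff.mp (hA hx) g)]
      group
  | one => exact ⟨1, one_mem A, one_pow ℓ⟩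
  | mul y z _ _ hy hz =>
    obtain ⟨x, hx, rfl⟩ := hy
    obtain ⟨w, hw, rfl⟩ := hz
    exact ⟨x * w, mul_mem hx hw, Commute.mul_pow (mem_center_iff.mp (hA hw) x) ℓ⟩
  | inv y _ hy =>
    obtain ⟨x, hx, rfl⟩ := hy
    exact ⟨x⁻¹, inv_mem hx, inv_pow x ℓ⟩

theorem eq_bot_of_le_commutator_top [Group.IsNilpotent G] {H : Subgroup G}
    (h : H ≤ ⁅H, (⊤ : Subgroup G)⁆) : H = ⊥ := by
  have hlower : ∀ k, H ≤ (⊤ : Subgroup G).lowerCentralSeries k := by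
    intro k
    induction k with
    | zero => exact le_top
    | succ k ih => exact h.trans (commutator_mono ih le_rfl)
  obtain ⟨k, hk⟩ := Subgroup.nilpotent_iff_lowerCentralSeries.mp ‹Group.IsNilpotent G›
  exact le_bot_iff.mp (hk ▸ hlower k)

variable [Fact ℓ.Prime]

theorem IsPGroup.subsingleton_of_surjective_pow [Finite G] (hG : IsPGroup ℓ G)
    (h : Function.Surjective fun x : G => x ^ ℓ) : Subsingleton G := by
  rcases hG.card_eq_or_dvd with hcard | hdvd
  · exact (Nat.card_eq_one_iff_unique.mp hcard).1
  obtain ⟨x, hx⟩ := exists_prime_orderOf_dvd_card' ℓ hdvd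
  have hx1 : x = 1 := Finite.injective_iff_surjective.mpr h (by simp [← hx, pow_orderOf_eq_one])
  exact absurd (hx1 ▸ hx : orderOf (1 : G) = ℓ) (by simpa using (Fact.out : ℓ.Prime).one_lt.ne)

theorem IsPGroup.eq_bot_of_le_center_of_le_ellCentralStep [Finite G] (hG : IsPGroup ℓ G)
    {A : Subgroup G} (hA : A ≤ center G) (h : A ≤ ellCentralStep ℓ A) : A = ⊥ := by
  have hsurj : Function.Surjective fun x : A => x ^ ℓ := by
    rintro ⟨y, hy⟩
    obtain ⟨x, hx, rfl⟩ := exists_pow_eq_of_mem_ellCentralStep hA (h hy)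
    exact ⟨⟨x, hx⟩, rfl⟩
  have := (hG.to_subgroup A).subsingleton_of_surjective_pow hsurj
  exact A.eq_bot_of_subsingleton

theorem IsPGroup.eq_bot_of_le_ellCentralStep [Finite G] (hG : IsPGroup ℓ G) {H : Subgroup G}
    [H.Normal] (h : H ≤ ellCentralStep ℓ H) : H = ⊥ := by
  let π := QuotientGroup.mk' ⁅H, (⊤ : Subgroup G)⁆
  have hcent : H.map π ≤ center (G ⧸ ⁅H, (⊤ : Subgroup G)⁆) := by
    rw [← commutator_top_right_eq_bot_iff_le_center,
      ← map_top_of_surjective π (QuotientGroup.mk'_surjective _), ← map_commutator,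
      Subgroup.map_eq_bot_iff, QuotientGroup.ker_mk']
  have hstep : H.map π ≤ ellCentralStep ℓ (H.map π) :=
    (map_mono h).trans (map_ellCentralStep_le π H)
  have hHC : H ≤ ⁅H, (⊤ : Subgroup G)⁆ := by
    have := (hG.to_quotient _).eq_bot_of_le_center_of_le_ellCentralStep hcent hstep
    rwa [Subgroup.map_eq_bot_iff, QuotientGroup.ker_mk'] at this
  have := hG.isNilpotent
  exact eq_bot_of_le_commutator_top hHC

theorem IsPGroup.le_index_ellCentralSeries [Finite G] (hG : IsPGroup ℓ G) :
    (k : ℕ) → ellCentralSeries ℓ G (k + 1) ≠ ⊥ → k + 1 ≤ (ellCentralSeries ℓ G (k + 1)).index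
  | 0, _ => by simp [ellCentralSeries]
  | k + 1, hne => by
    have hprev : ellCentralSeries ℓ G (k + 1) ≠ ⊥ :=
      fun h => hne (le_bot_iff.mp (h ▸ ellCentralSeries_antitone (Nat.le_succ _)))
    have hlt : ellCentralSeries ℓ G (k + 2) < ellCentralSeries ℓ G (k + 1) :=
      (ellCentralStep_le _).lt_of_ne fun h => hprev (hG.eq_bot_of_le_ellCentralStep h.ge)
    exact (hG.le_index_ellCentralSeries k hprev).trans_lt (index_strictAnti hlt)

theorem IsPGroup.ellCentralSeries_card_eq_bot [Finite G] (hG : IsPGroup ℓ G) :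
    ellCentralSeries ℓ G (Nat.card G) = ⊥ := by
  obtain ⟨k, hk⟩ := Nat.exists_eq_add_one.mpr (Nat.card_pos (α := G))
  by_contra hne
  have hindex := hG.le_index_ellCentralSeries k (hk ▸ hne)
  rw [← hk] at hindex
  have hcard := card_mul_index (ellCentralSeries ℓ G (Nat.card G))
  refine hne (eq_bot_of_card_eq _ ?_)
  nlinarith [Nat.card_pos (α := ellCentralSeries ℓ G (Nat.card G))]

end Vanishing

section Index

open Finset Pointwise in
theorem Subgroup.card_closure_le_pow {Q : Type*} [CommGroup Q] {n : ℕ} (hn : 0 < n)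
    (S : Finset Q) (hS : ∀ s ∈ S, s ^ n = 1) : Nat.card (closure (S : Set Q)) ≤ n ^ S.card := by
  classical
  induction S using Finset.induction_on with
  | empty => simp
  | insert a T ha ih =>
    have hsup : closure (↑(insert a T) : Set Q) = zpowers a ⊔ closure (T : Set Q) := by
      rw [coe_insert, Set.insert_eq, closure_union, zpowers_eq_closure]
    have hzpowers : Nat.card (zpowers a) ≤ n := by
      rw [Nat.card_zpowers]
      exact orderOf_le_of_pow_eq_one hn (hS a (mem_insert_self a T))
    calc Nat.card (closure (↑(insert a T) : Set Q))
        = Nat.card ((zpowers a : Set Q) * (closure (T : Set Q) : Set Q)) := by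
          rw [hsup, ← mul_normal]; rfl
      _ ≤ Nat.card (zpowers a) * Nat.card (closure (T : Set Q)) := Set.natCard_mul_le
      _ ≤ n * n ^ T.card := Nat.mul_le_mul hzpowers (ih fun s hs => hS s (mem_insert_of_mem hs))
      _ = n ^ (insert a T).card := by rw [card_insert_of_notMem ha, pow_succ']

variable {ℓ : ℕ} {G : Type*} [Group G]

theorem index_frattiniStep_top_le (hℓ : 0 < ℓ) {S : Finset G}
    (hS : closure (S : Set G) = ⊤) : (frattiniStep ℓ (⊤ : Subgroup G)).index ≤ ℓ ^ S.card := by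
  classical
  set N := frattiniStep ℓ (⊤ : Subgroup G)
  let _ : CommGroup (G ⧸ N) :=
    { mul_comm := by
        rintro ⟨x⟩ ⟨y⟩
        refine (QuotientGroup.eq.mpr ?_).symm
        have : x⁻¹ * y⁻¹ * x * y ∈ N :=
          Subgroup.subset_closure (Or.inr ⟨x, mem_top x, y, mem_top y, rfl⟩)
        simpa [mul_assoc] using this }
  let π := QuotientGroup.mk' N
  have hgen : closure ((S.image π : Finset (G ⧸ N)) : Set (G ⧸ N)) = ⊤ := by
    rw [Finset.coe_image, ← MonoidHom.map_closure, hS,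
      map_top_of_surjective _ (QuotientGroup.mk'_surjective N)]
  have hpow : ∀ s ∈ S.image π, s ^ ℓ = 1 := by
    simp only [Finset.mem_image]
    rintro _ ⟨x, -, rfl⟩
    rw [← map_pow, QuotientGroup.mk'_apply, QuotientGroup.eq_one_iff]
    exact Subgroup.subset_closure (Or.inl ⟨x, mem_top x, rfl⟩)
  calc N.index = Nat.card (closure ((S.image π : Finset (G ⧸ N)) : Set (G ⧸ N))) := by
        rw [hgen, card_top, index_eq_card]
    _ ≤ ℓ ^ (S.image π).card := card_closure_le_pow hℓ _ hpow
    _ ≤ ℓ ^ S.card := Nat.pow_le_pow_right hℓ Finset.card_image_le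

theorem frattiniStep_top_le_subgroupOf (H : Subgroup G) :
    frattiniStep ℓ (⊤ : Subgroup H) ≤ (frattiniStep ℓ H).subgroupOf H := by
  rw [subgroupOf, ← map_le_iff_le_comap]
  simpa only [← MonoidHom.range_eq_map, range_subtype] using
    map_frattiniStep_le (ℓ := ℓ) H.subtype ⊤

theorem index_frattiniStep_le [Finite G] (hℓ : 0 < ℓ) {S : Finset G}
    (hS : closure (S : Set G) = ⊤) (H : Subgroup G) :
    (frattiniStep ℓ H).index ≤ H.index * ℓ ^ (H.index * S.card) := by
  obtain ⟨T, hT, hTgen⟩ := exists_finset_card_le_mul H hS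
  have hrel : (frattiniStep ℓ H).relIndex H ≤ ℓ ^ (H.index * S.card) :=
    calc (frattiniStep ℓ H).relIndex H ≤ (frattiniStep ℓ (⊤ : Subgroup H)).index :=
          index_antitone (frattiniStep_top_le_subgroupOf H)
      _ ≤ ℓ ^ T.card := index_frattiniStep_top_le hℓ hTgen
      _ ≤ ℓ ^ (H.index * S.card) := Nat.pow_le_pow_right hℓ hT
  rw [← relIndex_mul_index (frattiniStep_le H), mul_comm]
  exact Nat.mul_le_mul_left _ hrel

def frattiniIndexBound (ℓ d : ℕ) : ℕ → ℕ
  | 0 => 1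
  | n + 1 => frattiniIndexBound ℓ d n * ℓ ^ (frattiniIndexBound ℓ d n * d)

theorem index_frattiniSeries_le [Finite G] (hℓ : 0 < ℓ) {S : Finset G}
    (hS : closure (S : Set G) = ⊤) {d : ℕ} (hSd : S.card ≤ d) :
    (n : ℕ) → (frattiniSeries ℓ G n).index ≤ frattiniIndexBound ℓ d n
  | 0 => by simp [frattiniSeries, frattiniIndexBound]
  | n + 1 => by
    have ih := index_frattiniSeries_le hℓ hS hSd n
    calc (frattiniSeries ℓ G (n + 1)).index
        ≤ (frattiniStep ℓ (frattiniSeries ℓ G n)).index :=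
          index_antitone (frattiniStep_frattiniSeries_le n)
      _ ≤ (frattiniSeries ℓ G n).index * ℓ ^ ((frattiniSeries ℓ G n).index * S.card) :=
          index_frattiniStep_le hℓ hS _
      _ ≤ frattiniIndexBound ℓ d (n + 1) := by
          rw [frattiniIndexBound]
          gcongr

end Index

/-- Remark 3.1.2 (for finite `ℓ`-groups): the iterated Frattini filtration and the
descending `ℓ`-central filtration are equivalent, i.e. there is a function `τ` with
`F^{τ(d,n)} G ⊆ Φ^n G ⊆ F^n G` for every finite `ℓ`-group `G` generated by `d` elements
and every `n ≥ 1`. -/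
theorem stmt7 {ℓ : ℕ} (hℓ : ℓ.Prime) :
    ∃ τ : ℕ × ℕ → ℕ,
      ∀ (G : Type*) [Group G] [Fintype G],
        (∃ s, Fintype.card G = ℓ ^ s) →
        ∀ d : ℕ, (∃ S : Finset G, S.card ≤ d ∧ Subgroup.closure (S : Set G) = ⊤) →
        ∀ n : ℕ, 1 ≤ n →
          ellCentralSeries ℓ G (τ (d, n)) ≤ frattiniSeries ℓ G n ∧
          frattiniSeries ℓ G n ≤ ellCentralSeries ℓ G n := by
  have := Fact.mk hℓ
  refine ⟨fun p => frattiniIndexBound ℓ p.1 p.2, ?_⟩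
  rintro G _ _ ⟨s, hs⟩ d ⟨S, hSd, hS⟩ n -
  refine ⟨?_, frattiniSeries_le_ellCentralSeries n⟩
  set N := frattiniSeries ℓ G n
  have hG : IsPGroup ℓ G := IsPGroup.of_card (by rw [Nat.card_eq_fintype_card, hs])
  have hcard : Nat.card (G ⧸ N) ≤ frattiniIndexBound ℓ d n :=
    index_eq_card N ▸ index_frattiniSeries_le hℓ.pos hS hSd n
  rw [← QuotientGroup.ker_mk' N, ← Subgroup.map_eq_bot_iff, ← le_bot_iff]
  calc (ellCentralSeries ℓ G (frattiniIndexBound ℓ d n)).map (QuotientGroup.mk' N)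
      ≤ ellCentralSeries ℓ (G ⧸ N) (frattiniIndexBound ℓ d n) := map_ellCentralSeries_le _ _
    _ ≤ ellCentralSeries ℓ (G ⧸ N) (Nat.card (G ⧸ N)) := ellCentralSeries_antitone hcard
    _ = ⊥ := (hG.to_quotient N).ellCentralSeries_card_eq_bot
end

section
/- (Lemma 13.6.1.) Let A be a commutative ring and B a commutative A-algebra generated as an A-module by the elements 1, x₁, …, x_n. Suppose that the module of syzygies N = {(c₀,…,c_n) ∈ A^{n+1} : c₀ + c₁x₁ + ⋯ + c_nx_n = 0 in B} is generated as an A-module by y₁, …, y_m. Let Φ : A[T₁,…,T_n] → B be the A-algebra homomorphism sending each T_i to x_i, and let J = ker Φ. Identify each (c₀,…,c_n) ∈ A^{n+1} with the polynomial c₀ + c₁T₁ + ⋯ + c_nT_n of degree at most 1; in particular each y_i gives an element of J. For each pair 1 ≤ i, j ≤ n choose elements b_u^{(i,j)} ∈ A (0 ≤ u ≤ n) such that x_i x_j = b₀^{(i,j)} + b₁^{(i,j)}x₁ + ⋯ + b_n^{(i,j)}x_n, and set q_{i,j} = b₀^{(i,j)} + b₁^{(i,j)}T₁ + ⋯ +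 b_n^{(i,j)}T_n − T_iT_j ∈ J. Then J is generated, as an ideal of A[T₁,…,T_n], by y₁,…,y_m together with the q_{i,j} for 1 ≤ i, j ≤ n. -/
/-!
Modulo the ideal generated by the `q_{i,j}`, multiplication by `Tᵢ` sends a polynomial of degree
at most one to one of degree at most one, so every polynomial is congruent to one of degree at
most one. Such a polynomial lies in the kernel exactly when its coefficient vector is a syzygy,
i.e. an `A`-combination of the `yₖ`.
-/

open MvPolynomial

namespace MvPolynomial

variable {A : Type*} [CommRing A] {n : ℕ}

noncomputable def affineForm : (Fin (n + 1) → A) →ₗ[A] MvPolynomial (Fin n) A :=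
  Fintype.linearCombination A (Fin.cons 1 X)

theorem affineForm_apply (c : Fin (n + 1) → A) :
    affineForm c = C (c 0) + ∑ j : Fin n, C (c j.succ) * X j := by
  simp [affineForm, Fintype.linearCombination_apply, Fin.sum_univ_succ, smul_eq_C_mul]

theorem aeval_affineForm {B : Type*} [CommRing B] [Algebra A B] (x : Fin n → B)
    (c : Fin (n + 1) → A) :
    aeval x (affineForm c) = algebraMap A B (c 0) + ∑ i : Fin n, c i.succ • x i := by
  simp [affineForm_apply, Algebra.smul_def]

theorem affineForm_single_zero : affineForm (Pi.single 0 1 : Fin (n + 1) → A) = 1 := by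
  simp [affineForm, Fintype.linearCombination_apply, Pi.single_apply]

theorem affineForm_single_succ (i : Fin n) :
    affineForm (Pi.single i.succ 1 : Fin (n + 1) → A) = X i := by
  simp [affineForm, Fintype.linearCombination_apply, Pi.single_apply]

theorem X_mul_affineForm (b : Fin n → Fin n → Fin (n + 1) → A) (i : Fin n)
    (c : Fin (n + 1) → A) :
    X i * affineForm c =
      affineForm (c 0 • Pi.single i.succ 1 + ∑ j : Fin n, c j.succ • b i j)
        - ∑ j : Fin n, c j.succ • (affineForm (b i j) - X i * X j) := by
  have hexpand : X i * affineForm c = c 0 • X i + ∑ j : Fin n, c j.succ • (X i * X j) := by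
    simp only [affineForm_apply, smul_eq_C_mul, mul_add, Finset.mul_sum, mul_left_comm (X i)]
    rw [mul_comm]
  rw [hexpand, map_add, map_smul, map_sum, affineForm_single_succ]
  simp only [map_smul, smul_sub, Finset.sum_sub_distrib]
  abel

variable {I : Ideal (MvPolynomial (Fin n) A)} {b : Fin n → Fin n → Fin (n + 1) → A}

theorem mem_sup_range_affineForm (hq : ∀ i j, affineForm (b i j) - X i * X j ∈ I)
    (f : MvPolynomial (Fin n) A) :
    f ∈ I.restrictScalars A ⊔ LinearMap.range affineForm := by
  induction f using MvPolynomial.induction_on with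
  | C a =>
    refine Submodule.mem_sup_right ⟨a • Pi.single 0 1, ?_⟩
    rw [map_smul, affineForm_single_zero, smul_eq_C_mul, mul_one]
  | add p q hp hq => exact Submodule.add_mem _ hp hq
  | mul_X p i hp =>
    obtain ⟨h, hh, _, ⟨c, rfl⟩, rfl⟩ := Submodule.mem_sup.mp hp
    rw [mul_comm, mul_add, X_mul_affineForm b]
    refine Submodule.add_mem _ (Submodule.mem_sup_left (I.mul_mem_left _ hh)) ?_
    refine Submodule.sub_mem _ (Submodule.mem_sup_right (LinearMap.mem_range_self _ _)) ?_
    exact Submodule.mem_sup_left <|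
      Submodule.sum_mem _ fun j _ => (I.restrictScalars A).smul_mem _ (hq i j)

theorem ker_aeval_eq {B : Type*} [CommRing B] [Algebra A B] {x : Fin n → B} {m : ℕ}
    {y : Fin m → Fin (n + 1) → A} (hI : I ≤ RingHom.ker (aeval x))
    (hsyz : ∀ c, aeval x (affineForm c) = 0 → c ∈ Submodule.span A (Set.range y))
    (hy : ∀ k, affineForm (y k) ∈ I) (hq : ∀ i j, affineForm (b i j) - X i * X j ∈ I) :
    RingHom.ker (aeval x) = I := by
  refine le_antisymm (fun f hf => ?_) hI
  obtain ⟨h, hh, _, ⟨c, rfl⟩, rfl⟩ := Submodule.mem_sup.mp (mem_sup_range_affineForm hq f)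
  have hc : c ∈ Submodule.span A (Set.range y) := by
    refine hsyz c ?_
    rwa [RingHom.mem_ker, map_add, hI hh, zero_add] at hf
  have hcI : c ∈ (I.restrictScalars A).comap affineForm :=
    (Submodule.span_le (p := (I.restrictScalars A).comap affineForm)).mpr
      (Set.range_subset_iff.mpr hy) hc
  exact I.add_mem hh hcI

end MvPolynomial

theorem stmt8_general {A B : Type*} [CommRing A] [CommRing B] [Algebra A B]
    (n m : ℕ) (x : Fin n → B)
    (y : Fin m → (Fin (n + 1) → A))
    (hsyz : ∀ c : Fin (n + 1) → A,
      (algebraMap A B (c 0) + ∑ i : Fin n, c i.succ • x i = 0) ↔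
        c ∈ Submodule.span A (Set.range y))
    (b : Fin n → Fin n → Fin (n + 1) → A)
    (hb : ∀ i j, x i * x j =
      algebraMap A B (b i j 0) + ∑ u : Fin n, b i j u.succ • x u) :
    RingHom.ker (MvPolynomial.aeval x : MvPolynomial (Fin n) A →ₐ[A] B) =
      Ideal.span
        ((Set.range fun i : Fin m =>
            (C (y i 0) + ∑ j : Fin n, C (y i j.succ) * X j :
              MvPolynomial (Fin n) A)) ∪
         (Set.range fun p : Fin n × Fin n =>
            (C (b p.1 p.2 0) + ∑ u : Fin n, C (b p.1 p.2 u.succ) * X u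
              - X p.1 * X p.2 : MvPolynomial (Fin n) A))) := by
  simp only [← affineForm_apply]
  refine ker_aeval_eq (Ideal.span_le.mpr ?_) (fun c hc => (hsyz c).mp ?_)
    (fun k => Ideal.subset_span (Or.inl ⟨k, rfl⟩))
    (fun i j => Ideal.subset_span (Or.inr ⟨(i, j), rfl⟩))
  · rintro _ (⟨k, rfl⟩ | ⟨⟨i, j⟩, rfl⟩)
    · simpa [RingHom.mem_ker, aeval_affineForm] using
        (hsyz (y k)).mpr (Submodule.subset_span ⟨k, rfl⟩)
    · simp [RingHom.mem_ker, aeval_affineForm, ← hb]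
  · rwa [← aeval_affineForm]

/-- Lemma 13.6.1: let `B` be a commutative `A`-algebra generated as an `A`-module by
`1, x₁, …, xₙ`, whose module of syzygies is generated by `y₁, …, y_m`.  Then the kernel
of the evaluation map `A[T₁,…,Tₙ] → B`, `Tᵢ ↦ xᵢ`, is generated as an ideal by the
degree-one polynomials corresponding to the `yᵢ` together with the quadratic relations
`q_{i,j} = b₀^{(i,j)} + ∑ᵤ bᵤ^{(i,j)} Tᵤ − TᵢTⱼ` expressing the products `xᵢxⱼ`. -/
theorem stmt8 {A B : Type*} [CommRing A] [CommRing B] [Algebra A B]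
    (n m : ℕ) (x : Fin n → B)
    (hgen : Submodule.span A ({1} ∪ Set.range x) = (⊤ : Submodule A B))
    (y : Fin m → (Fin (n + 1) → A))
    (hsyz : ∀ c : Fin (n + 1) → A,
      (algebraMap A B (c 0) + ∑ i : Fin n, c i.succ • x i = 0) ↔
        c ∈ Submodule.span A (Set.range y))
    (b : Fin n → Fin n → Fin (n + 1) → A)
    (hb : ∀ i j, x i * x j =
      algebraMap A B (b i j 0) + ∑ u : Fin n, b i j u.succ • x u) :
    RingHom.ker (MvPolynomial.aeval x : MvPolynomial (Fin n) A →ₐ[A] B) =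
      Ideal.span
        ((Set.range fun i : Fin m =>
            (C (y i 0) + ∑ j : Fin n, C (y i j.succ) * X j :
              MvPolynomial (Fin n) A)) ∪
         (Set.range fun p : Fin n × Fin n =>
            (C (b p.1 p.2 0) + ∑ u : Fin n, C (b p.1 p.2 u.succ) * X u
              - X p.1 * X p.2 : MvPolynomial (Fin n) A))) :=
  stmt8_general n m x y hsyz b hb
end

section
/- (Lemma 14.3.) Let φ : A → B be a homomorphism of commutative rings. For f ∈ A, let A[1/f] denote the localization of A away from f (inverting the powers of f), let B[1/f] denote the localization of B away from φ(f), and let φ_f : A[1/f] → B[1/f] be the induced ring homomorphism. Then each of the following three subsets of A is an ideal of A: the set of f such that φ_f is injective; the set of f such that φ_f is surjective; and the set of f such that φ_f is bijective. -/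
/-!
Injectivity of `A[1/f] → B[1/φ f]` means that every `a ∈ ker φ` is killed by a power of `f`, and
surjectivity that for every `b ∈ B` some `φ(f)ⁿ b` lies in `φ(A)`. For fixed `a` (resp. `b`), the
`f` with this property form the radical of the ideal quotient `(0 : a)` (resp. `(φ(A) : b)`), so
both sets are intersections of ideals, and the bijectivity set is their intersection.
-/

open Function

namespace Submodule

variable {A M : Type*} [CommRing A] [AddCommGroup M] [Module A M]

theorem mem_iInf_radical_colon_singleton {ι : Sort*} (N : Submodule A M) (x : ι → M) {r : A} :
    r ∈ ⨅ i, (N.colon {x i}).radical ↔ ∀ i, ∃ n : ℕ, r ^ n • x i ∈ N := by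
  simp only [mem_iInf, Ideal.mem_radical_iff, mem_colon_singleton]

end Submodule

namespace Localization

variable {A B : Type*} [CommRing A] [CommRing B]

theorem awayMap_injective_iff_mem_iInf (φ : A →+* B) (f : A) :
    Injective (awayMap φ f) ↔
      f ∈ ⨅ a : RingHom.ker φ, ((⊥ : Ideal A).colon {(a : A)}).radical := by
  rw [Submodule.mem_iInf_radical_colon_singleton, awayMap_injective_iff, Subtype.forall]
  simp only [RingHom.mem_ker, smul_eq_mul, Submodule.mem_bot]

theorem awayMap_algebraMap_surjective_iff_mem_iInf [Algebra A B] (f : A) :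
    Surjective (awayMap (algebraMap A B) f) ↔
      f ∈ ⨅ b : B, ((1 : Submodule A B).colon {b}).radical := by
  rw [Submodule.mem_iInf_radical_colon_singleton, awayMap_surjective_iff]
  simp only [Submodule.mem_one, Algebra.smul_def, map_pow]
  exact forall_congr' fun _ ↦ exists_comm

end Localization

/-- Lemma 14.3: for a homomorphism `φ : A → B` of commutative rings, the set of `f ∈ A`
such that the induced map `A[1/f] → B[1/φ(f)]` between the localizations away from `f`
and away from `φ f` is injective (resp. surjective, resp. bijective) is an ideal of `A`. -/
theorem stmt9 {A B : Type*} [CommRing A] [CommRing B] (φ : A →+* B) :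
    (∃ I : Ideal A, ∀ f : A,
        f ∈ I ↔ Function.Injective (Localization.awayMap φ f)) ∧
    (∃ I : Ideal A, ∀ f : A,
        f ∈ I ↔ Function.Surjective (Localization.awayMap φ f)) ∧
    (∃ I : Ideal A, ∀ f : A,
        f ∈ I ↔ Function.Bijective (Localization.awayMap φ f)) := by
  let := φ.toAlgebra
  obtain ⟨I, hI⟩ : ∃ I : Ideal A, ∀ f, f ∈ I ↔ Injective (Localization.awayMap φ f) :=
    ⟨_, fun f ↦ (Localization.awayMap_injective_iff_mem_iInf φ f).symm⟩
  obtain ⟨J, hJ⟩ : ∃ J : Ideal A, ∀ f, f ∈ J ↔ Surjective (Localization.awayMap φ f) :=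
    ⟨_, fun f ↦ (Localization.awayMap_algebraMap_surjective_iff_mem_iInf f).symm⟩
  exact ⟨⟨I, hI⟩, ⟨J, hJ⟩, ⟨I ⊓ J, fun f ↦ by rw [Submodule.mem_inf, hI, hJ]; rfl⟩⟩
end

section
/- (Lemma 14.5, open-immersion criterion.) Let φ : A → B be a homomorphism of commutative rings, and let P be an ideal of A whose elements are exactly those f ∈ A such that the induced homomorphism A[1/f] → B[1/φ(f)] between the localizations away from f and away from φ(f) is bijective (such an ideal exists by Lemma 14.3). Then the morphism of affine schemes Spec B → Spec A induced by φ is an open immersion if and only if the ideal generated by φ(P) in B is the unit ideal of B. -/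
/-!
Over a basic open `D(f) ⊆ Spec A`, the morphism `Spec B → Spec A` restricts to
`Spec B[1/φ f] → Spec A[1/f]`, so `P` consists of the `f` over whose basic open the morphism
is an isomorphism, and `map φ P = ⊤` says that the preimages `D(φ f)` of these cover `Spec B`.
An open immersion is an isomorphism over every basic open contained in its (open) image;
conversely, a morphism that is an open immersion over each member of a family of opens
covering its image is one.
-/

open AlgebraicGeometry CategoryTheory

universe u

namespace AlgebraicGeometry

variable {X Y : Scheme.{u}}

lemma Scheme.Hom.isIso_morphismRestrict_of_le_opensRange (g : X ⟶ Y) [IsOpenImmersion g]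
    {V : Y.Opens} (hV : V ≤ g.opensRange) : IsIso (g ∣_ V) := by
  rw [isIso_iff_isOpenImmersion_and_surjective]
  refine ⟨inferInstance, ⟨fun y ↦ ?_⟩⟩
  obtain ⟨x, hx⟩ := hV y.2
  exact ⟨⟨x, show g x ∈ V from hx ▸ y.2⟩,
    Subtype.ext ((morphismRestrict_base_coe g V _).trans hx)⟩

lemma IsOpenImmersion.of_forall_exists_morphismRestrict (g : X ⟶ Y)
    (h : ∀ x, ∃ U : Y.Opens, g x ∈ U ∧ IsOpenImmersion (g ∣_ U)) : IsOpenImmersion g := by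
  have hU (U : Y.Opens) [IsOpenImmersion (g ∣_ U)] : IsOpenImmersion ((g ⁻¹ᵁ U).ι ≫ g) := by
    rw [← morphismRestrict_ι]; infer_instance
  refine IsOpenImmersion.of_forall_source_exists g (fun x x' hxx' ↦ ?_) fun x ↦ ?_
  · obtain ⟨U, hxU, _⟩ := h x
    have hx'U : g x' ∈ U := hxx' ▸ hxU
    exact congrArg Subtype.val <| ((g ⁻¹ᵁ U).ι ≫ g).isOpenEmbedding.injective
      (a₁ := ⟨x, hxU⟩) (a₂ := ⟨x', hx'U⟩) hxx'
  · obtain ⟨U, hxU, _⟩ := h x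
    exact ⟨g ⁻¹ᵁ U, (g ⁻¹ᵁ U).ι, inferInstance, by simpa using hxU, hU U⟩

lemma isIso_SpecMap_morphismRestrict_basicOpen_iff {A B : Type u} [CommRing A] [CommRing B]
    (φ : A →+* B) (f : A) :
    IsIso (Spec.map (CommRingCat.ofHom φ) ∣_ PrimeSpectrum.basicOpen f) ↔
      Function.Bijective (Localization.awayMap φ f) := by
  have := (MorphismProperty.isomorphisms Scheme).arrow_mk_iso_iff
    (SpecMapRestrictBasicOpenIso (CommRingCat.ofHom φ) f)
  simp only [MorphismProperty.isomorphisms.iff] at this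
  exact this.trans isIso_SpecMap_iff

end AlgebraicGeometry

lemma Ideal.map_eq_top_iff_forall_exists_notMem {A B : Type*} [CommRing A] [CommRing B]
    (φ : A →+* B) (I : Ideal A) :
    I.map φ = ⊤ ↔ ∀ x : PrimeSpectrum B, ∃ f ∈ I, φ f ∉ x.asIdeal := by
  refine ⟨fun h x ↦ ?_, fun h ↦ ?_⟩
  · by_contra! hx
    exact x.isPrime.ne_top (top_le_iff.mp (h ▸ Ideal.map_le_iff_le_comap.mpr hx))
  · by_contra hne
    obtain ⟨q, hq, hIq⟩ := Ideal.exists_le_maximal _ hne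
    obtain ⟨f, hf, hfq⟩ := h ⟨q, hq.isPrime⟩
    exact hfq (hIq (Ideal.mem_map_of_mem φ hf))

/-- Lemma 14.5 (open-immersion criterion): let `φ : A → B` be a homomorphism of
commutative rings and `P` the ideal of those `f ∈ A` such that the induced map
`A[1/f] → B[1/φ(f)]` is bijective.  Then `Spec B → Spec A` is an open immersion if and
only if the ideal generated by `φ(P)` in `B` is the unit ideal. -/
theorem stmt10 {A B : Type u} [CommRing A] [CommRing B] (φ : A →+* B)
    (P : Ideal A)
    (hP : ∀ f : A, f ∈ P ↔ Function.Bijective (Localization.awayMap φ f)) :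
    IsOpenImmersion (Spec.map (CommRingCat.ofHom φ)) ↔ Ideal.map φ P = ⊤ := by
  set g := Spec.map (CommRingCat.ofHom φ)
  have hP' (f : A) : f ∈ P ↔ IsIso (g ∣_ PrimeSpectrum.basicOpen f) := by
    rw [hP, isIso_SpecMap_morphismRestrict_basicOpen_iff]
  rw [Ideal.map_eq_top_iff_forall_exists_notMem]
  refine ⟨fun _ x ↦ ?_, fun h ↦ IsOpenImmersion.of_forall_exists_morphismRestrict g fun x ↦ ?_⟩
  · have hx : g x ∈ g.opensRange := Scheme.Hom.mem_opensRange.mpr ⟨x, rfl⟩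
    obtain ⟨_, ⟨f, rfl⟩, hxf, hfg⟩ :=
      TopologicalSpace.Opens.isBasis_iff_nbhd.mp PrimeSpectrum.isBasis_basic_opens hx
    exact ⟨f, (hP' f).mpr (g.isIso_morphismRestrict_of_le_opensRange hfg), hxf⟩
  · obtain ⟨f, hfP, hfx⟩ := h x
    have := (hP' f).mp hfP
    exact ⟨PrimeSpectrum.basicOpen f, hfx, inferInstance⟩
end

section
/- (Lemma 14.5, description of the image.) Let φ : A → B be a homomorphism of commutative rings, and let P be an ideal of A whose elements are exactly those f ∈ A such that the induced homomorphism A[1/f] → B[1/φ(f)] between the localizations away from f and away from φ(f) is bijective. If the ideal generated by φ(P) in B is the unit ideal of B (equivalently, if Spec B → Spec A is an open immersion), then the image of the map Spec B → Spec A induced by φ is the open subset of Spec A complementary to the closed set V(P) of primes containing P; that is, the range of the induced map on prime spectra equals the complement of the zero locus of P. -/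
/-!
A prime of `B` cannot contain `φ(P)`, which generates the unit ideal, so the image of
`Spec B → Spec A` misses `V(P)`. Conversely a prime `p ∉ V(P)` avoids some `f ∈ P`, so it lies
in the basic open `D(f)`, which is the image of `Spec A[1/f]`; as `A[1/f] ≅ B[1/φ(f)]` compatibly
with `φ`, that image factors through `Spec B[1/φ(f)] → Spec B → Spec A`.
-/

open PrimeSpectrum

theorem PrimeSpectrum.range_comap_subset_compl_zeroLocus_iff {R S : Type*} [CommSemiring R]
    [CommSemiring S] (φ : R →+* S) (I : Ideal R) :
    Set.range (comap φ) ⊆ (zeroLocus (I : Set R))ᶜ ↔ I.map φ = ⊤ := by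
  rw [← zeroLocus_empty_iff_eq_top, Ideal.map, zeroLocus_span, ← preimage_comap_zeroLocus,
    Set.preimage_eq_empty_iff, Set.subset_compl_iff_disjoint_right, disjoint_comm]

theorem PrimeSpectrum.basicOpen_subset_range_comap_of_bijective_awayMap {R S : Type*}
    [CommSemiring R] [CommSemiring S] (φ : R →+* S) {f : R}
    (hf : Function.Bijective (Localization.awayMap φ f)) :
    (basicOpen f : Set (PrimeSpectrum R)) ⊆ Set.range (comap φ) := by
  have hcomm : (Localization.awayMap φ f).comp (algebraMap R (Localization.Away f)) =
      (algebraMap S (Localization.Away (φ f))).comp φ :=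
    IsLocalization.map_comp _
  have hsurj : Function.Surjective (comap (Localization.awayMap φ f)) :=
    (comapEquiv (RingEquiv.ofBijective _ hf).symm).surjective
  rw [← localization_away_comap_range (Localization.Away f) f, ← hsurj.range_comp,
    ← comap_comp, hcomm, comap_comp]
  exact Set.range_comp_subset_range _ _

/-- Lemma 14.5 (description of the image): let `φ : A → B` be a homomorphism of
commutative rings and `P` the ideal of those `f ∈ A` such that the induced map
`A[1/f] → B[1/φ(f)]` is bijective.  If `φ(P)` generates the unit ideal of `B`, then the
image of `Spec B → Spec A` is the complement of the zero locus `V(P)`. -/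
theorem stmt11 {A B : Type*} [CommRing A] [CommRing B] (φ : A →+* B)
    (P : Ideal A)
    (hP : ∀ f : A, f ∈ P ↔ Function.Bijective (Localization.awayMap φ f))
    (hunit : Ideal.map φ P = ⊤) :
    Set.range (PrimeSpectrum.comap φ) =
      (PrimeSpectrum.zeroLocus (P : Set A))ᶜ := by
  refine subset_antisymm ((range_comap_subset_compl_zeroLocus_iff φ P).mpr hunit) fun p hp ↦ ?_
  have hp : ¬P ≤ p.asIdeal := hp
  obtain ⟨f, hfP, hfp⟩ := SetLike.not_le_iff_exists.mp hp
  exact basicOpen_subset_range_comap_of_bijective_awayMap φ ((hP f).mp hfP) hfp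
end

section
/- (Lemma 25.2.) Let k be a field and let m, n ≥ 0. Let the symmetric group S_n act on the polynomial ring k[Z₁,…,Z_m,X₁,…,X_n] by permuting the variables X₁,…,X_n (leaving the Z's fixed), and hence act on the prime spectrum Spec k[Z₁,…,Z_m,X₁,…,X_n] via the induced homeomorphisms. Let g₁,…,g_r ∈ k[Z₁,…,Z_m,X₁,…,X_n] and suppose that the Zariski-closed subset F = V(g₁,…,g_r) of the prime spectrum satisfies σ(F) = F for every σ ∈ S_n. Then there exist finitely many polynomials f₁,…,f_s ∈ k[Z₁,…,Z_m,X₁,…,X_n], each invariant under every σ ∈ S_n (i.e. totally symmetric in the variables X₁,…,X_n), such that F = V(f₁,…,f_s). -/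
/-!
For each `gᵢ` take the polynomial `Pᵢ(T) = ∏ (T - σ gᵢ)` over the orbit of `gᵢ` under `Sₙ`.
It is `Sₙ`-invariant, so its coefficients are symmetric. Since `Pᵢ` is monic and vanishes at
every `σ gᵢ`, a prime ideal contains all the non-leading coefficients of `Pᵢ` exactly when it
contains every `σ gᵢ`. Hence these coefficients cut out `V(σ gᵢ : σ, i)`, and this set equals `F`
because `F` is `Sₙ`-stable.
-/

open Polynomial PrimeSpectrum

namespace Polynomial

variable {R : Type*} [CommRing R] {p : Ideal R}

theorem IsWeaklyEisensteinAt.mem_of_isRoot [p.IsPrime] {f : R[X]} (hf : f.IsWeaklyEisensteinAt p)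
    (hmo : f.Monic) {x : R} (hroot : f.IsRoot x) : x ∈ p :=
  Ideal.IsPrime.mem_of_pow_mem ‹_› _ (hf.pow_natDegree_le_of_root_of_monic_mem hroot hmo _ le_rfl)

theorem isWeaklyEisensteinAt_X_sub_C {x : R} (hx : x ∈ p) : (X - C x).IsWeaklyEisensteinAt p := by
  refine ⟨fun {n} hn => ?_⟩
  obtain rfl : n = 0 := by have := natDegree_X_sub_C_le x; omega
  simpa using hx

theorem isWeaklyEisensteinAt_prod_X_sub_C {ι : Type*} (s : Finset ι) {a : ι → R}
    (ha : ∀ i ∈ s, a i ∈ p) : (∏ i ∈ s, (X - C (a i))).IsWeaklyEisensteinAt p :=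
  Finset.prod_induction _ (fun f : R[X] => f.IsWeaklyEisensteinAt p) (fun _ _ hf hg => hf.mul hg)
    ⟨fun h => by simp at h⟩ fun i hi => isWeaklyEisensteinAt_X_sub_C (ha i hi)

end Polynomial

section GroupAction

variable {G : Type*} [Group G] {R : Type*} [CommRing R] [MulSemiringAction G R]

theorem PrimeSpectrum.zeroLocus_range_smul_eq {ι : Type*} (a : ι → R)
    (h : ∀ g : G, comap (MulSemiringAction.toRingHom G R g) '' zeroLocus (Set.range a) =
      zeroLocus (Set.range a)) :
    zeroLocus (Set.range fun gi : G × ι => gi.1 • a gi.2) = zeroLocus (Set.range a) := by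
  refine (zeroLocus_anti_mono ?_).antisymm fun p hp => ?_
  · rintro _ ⟨i, rfl⟩
    exact ⟨(1, i), one_smul G (a i)⟩
  · rintro _ ⟨⟨g, i⟩, rfl⟩
    obtain ⟨q, hq, rfl⟩ := (h g⁻¹).symm ▸ hp
    show g⁻¹ • g • a i ∈ q.asIdeal
    rw [inv_smul_smul]
    exact hq ⟨i, rfl⟩

variable [Fintype G]

theorem prodXSubSMul.isWeaklyEisensteinAt_iff (p : Ideal R) [p.IsPrime] (x : R) :
    (prodXSubSMul G R x).IsWeaklyEisensteinAt p ↔ ∀ g : G, g • x ∈ p := by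
  refine ⟨fun h g => h.mem_of_isRoot (prodXSubSMul.monic G R x) ?_, fun h => ?_⟩
  · rw [IsRoot, ← prodXSubSMul.smul G R x g, smul_eval_smul, prodXSubSMul.eval, smul_zero]
  · refine isWeaklyEisensteinAt_prod_X_sub_C _ fun q _ => ?_
    obtain ⟨g, rfl⟩ := QuotientGroup.mk_surjective q
    rw [MulAction.ofQuotientStabilizer_mk]
    exact h g

theorem PrimeSpectrum.zeroLocus_range_coeff_prodXSubSMul {ι : Type*} (a : ι → R) :
    zeroLocus (Set.range fun ij : Σ i, Fin (prodXSubSMul G R (a i)).natDegree =>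
        (prodXSubSMul G R (a ij.1)).coeff ij.2) =
      zeroLocus (Set.range fun gi : G × ι => gi.1 • a gi.2) := by
  ext p
  simp only [mem_zeroLocus, Set.range_subset_iff, SetLike.mem_coe, Sigma.forall, Prod.forall]
  rw [forall_comm]
  refine forall_congr' fun i => ?_
  rw [← prodXSubSMul.isWeaklyEisensteinAt_iff, isWeaklyEisensteinAt_iff, Fin.forall_iff]

end GroupAction

namespace MvPolynomial

variable (R : Type*) [CommSemiring R]

noncomputable def renameEquivHom (σ : Type*) :
    Equiv.Perm σ →* (MvPolynomial σ R ≃ₐ[R] MvPolynomial σ R) where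
  toFun e := renameEquiv R e
  map_one' := renameEquiv_refl R
  map_mul' e f := (renameEquiv_trans R f e).symm

noncomputable abbrev renameInrAction (σ τ : Type*) :
    MulSemiringAction (Equiv.Perm τ) (MvPolynomial (σ ⊕ τ) R) :=
  MulSemiringAction.compHom _
    ((renameEquivHom R (σ ⊕ τ)).comp ((Equiv.Perm.sumCongrHom σ τ).comp (MonoidHom.inr _ _)))

end MvPolynomial

/-- Lemma 25.2: if a Zariski-closed subset `F = V(g₁,…,g_r)` of
`Spec k[Z₁,…,Z_m,X₁,…,X_n]` is invariant under the action of the symmetric group `Sₙ`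
permuting the variables `X₁,…,Xₙ`, then `F` can be defined by finitely many equations
`f₁ = ⋯ = f_s = 0` where each `fᵢ` is totally symmetric in `X₁,…,Xₙ`. -/
theorem stmt12 {k : Type*} [Field k] (m n r : ℕ)
    (g : Fin r → MvPolynomial (Fin m ⊕ Fin n) k)
    (hinv : ∀ σ : Equiv.Perm (Fin n),
      (PrimeSpectrum.comap
          (MvPolynomial.rename (Equiv.sumCongr (Equiv.refl (Fin m)) σ)).toRingHom) ''
        PrimeSpectrum.zeroLocus (Set.range g) =
        PrimeSpectrum.zeroLocus (Set.range g)) :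
    ∃ (s : ℕ) (f : Fin s → MvPolynomial (Fin m ⊕ Fin n) k),
      (∀ (i : Fin s) (σ : Equiv.Perm (Fin n)),
        MvPolynomial.rename (Equiv.sumCongr (Equiv.refl (Fin m)) σ) (f i) = f i) ∧
      PrimeSpectrum.zeroLocus (Set.range f) =
        PrimeSpectrum.zeroLocus (Set.range g) := by
  let _ := MvPolynomial.renameInrAction k (Fin m) (Fin n)
  let P i := prodXSubSMul (Equiv.Perm (Fin n)) _ (g i)
  let c (ij : Σ i, Fin (P i).natDegree) := (P ij.1).coeff ij.2
  obtain ⟨s, ⟨e⟩⟩ := Finite.exists_equiv_fin (Σ i, Fin (P i).natDegree)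
  refine ⟨s, c ∘ e.symm, fun j σ => prodXSubSMul.coeff _ _ _ σ _, ?_⟩
  rw [e.symm.surjective.range_comp, zeroLocus_range_coeff_prodXSubSMul,
    zeroLocus_range_smul_eq g hinv]
end

section
/- (Group-theoretic fact used in the proof of Proposition 1.4.7.) Let ℓ be a prime and let H'' ≤ H' ≤ H be finite groups such that H'' is normal in H', H' is normal in H, and both indices [H : H'] and [H' : H''] are powers of ℓ. Then the normal core of H'' in H, namely the subgroup ⋂_{h ∈ H} hH''h⁻¹, has index in H equal to a power of ℓ. -/
/-!
An element of a finite group `H` has its `ℓ ^ a`-th power in `H'`, and every element of `H'` has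
its `ℓ ^ b`-th power in `H''`. Since `H'` is normal, the latter applies to all conjugates of an
element of `H'`, so the `ℓ ^ (a + b)`-th power of any element lies in every conjugate of `H''`,
i.e. in the normal core. Hence `H` modulo the core is an `ℓ`-group.
-/

namespace Subgroup

variable {G : Type*} [Group G]

theorem pow_relIndex_mem_normalCore {K L : Subgroup G} [L.Normal] [(K.subgroupOf L).Normal]
    {x : G} (hx : x ∈ L) : x ^ K.relIndex L ∈ K.normalCore := fun g => by
  rw [← conj_pow]
  exact pow_index_mem (K.subgroupOf L) ⟨g * x * g⁻¹, Normal.conj_mem ‹_› x hx g⟩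

theorem isPGroup_quotient_of_forall_pow_mem {p : ℕ} (N : Subgroup G) [N.Normal]
    (h : ∀ g : G, ∃ k, g ^ p ^ k ∈ N) : IsPGroup p (G ⧸ N) := by
  refine fun q => QuotientGroup.induction_on q fun g => ?_
  obtain ⟨k, hk⟩ := h g
  exact ⟨k, (QuotientGroup.eq_one_iff _).mpr hk⟩

end Subgroup

theorem stmt15_general (ℓ : ℕ) (hℓ : ℓ.Prime) {H : Type*} [Group H] [Finite H]
    (H'' H' : Subgroup H)
    (hnorm'' : (H''.subgroupOf H').Normal) (hnorm' : H'.Normal)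
    (h1 : ∃ a, H'.index = ℓ ^ a)
    (h2 : ∃ b, (H''.subgroupOf H').index = ℓ ^ b) :
    ∃ c, H''.normalCore.index = ℓ ^ c := by
  have := Fact.mk hℓ
  obtain ⟨a, ha⟩ := h1
  obtain ⟨b, hb⟩ := h2
  have hpow (g : H) : g ^ ℓ ^ (a + b) ∈ H''.normalCore := by
    rw [pow_add, pow_mul, ← ha, ← hb]
    exact Subgroup.pow_relIndex_mem_normalCore (H'.pow_index_mem g)
  exact IsPGroup.iff_card.mp <|
    Subgroup.isPGroup_quotient_of_forall_pow_mem _ fun g => ⟨a + b, hpow g⟩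

/-- Group-theoretic fact used in the proof of Proposition 1.4.7: if `H'' ≤ H' ≤ H` are
finite groups with `H''` normal in `H'`, `H'` normal in `H`, and both indices
`[H : H']` and `[H' : H'']` powers of a prime `ℓ`, then the normal core
`⋂_{h ∈ H} hH''h⁻¹` of `H''` in `H` has index a power of `ℓ` in `H`. -/
theorem stmt15 (ℓ : ℕ) (hℓ : ℓ.Prime) {H : Type*} [Group H] [Finite H]
    (H'' H' : Subgroup H) (hle : H'' ≤ H')
    (hnorm'' : (H''.subgroupOf H').Normal) (hnorm' : H'.Normal)
    (h1 : ∃ a, H'.index = ℓ ^ a)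
    (h2 : ∃ b, (H''.subgroupOf H').index = ℓ ^ b) :
    ∃ c, H''.normalCore.index = ℓ ^ c :=
  stmt15_general ℓ hℓ H'' H' hnorm'' hnorm' h1 h2
end

section
/- (Univariate satisfiability criterion from the proof of Proposition 23.1.) Let k be an algebraically closed field, let f₁,…,f_r ∈ k[Y] be univariate polynomials not all zero, let g ∈ k[Y], and let u be a greatest common divisor of f₁,…,f_r in k[Y]. Then there exists x ∈ k such that f_i(x) = 0 for all 1 ≤ i ≤ r and g(x) ≠ 0, if and only if u does not divide g^(deg u), where deg u denotes the degree of u. -/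
/-! The common zeros of the `fᵢ` are the roots of their gcd `u`. If `u ∣ gⁿ`, every root of `u`
is a root of `g`. Conversely, if every root of `u` is a root of `g`, then `u`, which over an
algebraically closed field is a unit times the product of the `deg u` factors `X - a` over its
roots, divides `g ^ deg u`. -/

open Polynomial

namespace Polynomial

theorem isRoot_iff_forall_isRoot_of_gcd {R ι : Type*} [CommRing R] {f : ι → R[X]} {u : R[X]}
    (hu₁ : ∀ i, u ∣ f i) (hu₂ : ∀ v : R[X], (∀ i, v ∣ f i) → v ∣ u) (x : R) :
    u.IsRoot x ↔ ∀ i, (f i).IsRoot x :=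
  ⟨fun hx i => hx.dvd (hu₁ i),
    fun h => dvd_iff_isRoot.mp (hu₂ _ fun i => dvd_iff_isRoot.mpr (h i))⟩

theorem IsRoot.of_dvd_pow {R : Type*} [CommRing R] [IsReduced R] {u g : R[X]} {n : ℕ} {x : R}
    (hx : u.IsRoot x) (h : u ∣ g ^ n) : g.IsRoot x :=
  eq_zero_of_pow_eq_zero (by simpa using (hx.dvd h).eq_zero)

theorem Splits.dvd_pow_natDegree_of_isRoot {k : Type*} [Field k] {u g : k[X]} (hu : u.Splits)
    (hu0 : u ≠ 0) (h : ∀ x, u.IsRoot x → g.IsRoot x) : u ∣ g ^ u.natDegree :=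
  calc u = C u.leadingCoeff * (u.roots.map (X - C ·)).prod := hu.eq_prod_roots
    _ ∣ (u.roots.map (X - C ·)).prod := (C_mul_dvd (leadingCoeff_ne_zero.mpr hu0)).mpr dvd_rfl
    _ ∣ (u.roots.map fun _ => g).prod :=
        Multiset.prod_dvd_prod_of_dvd _ _ fun a ha =>
          dvd_iff_isRoot.mpr (h a (isRoot_of_mem_roots ha))
    _ = g ^ u.natDegree := by
        rw [Multiset.map_const', Multiset.prod_replicate, hu.natDegree_eq_card_roots]

end Polynomial

/-- Univariate satisfiability criterion from the proof of Proposition 23.1: over an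
algebraically closed field `k`, given univariate polynomials `f₁,…,f_r` (not all zero),
`g`, and a greatest common divisor `u` of the `fᵢ`, there is `x ∈ k` with `fᵢ(x) = 0`
for all `i` and `g(x) ≠ 0` if and only if `u` does not divide `g ^ (deg u)`. -/
theorem stmt16 {k : Type*} [Field k] [IsAlgClosed k] (r : ℕ)
    (f : Fin r → Polynomial k) (hf : ∃ i, f i ≠ 0) (g : Polynomial k)
    (u : Polynomial k) (hu₁ : ∀ i, u ∣ f i)
    (hu₂ : ∀ v : Polynomial k, (∀ i, v ∣ f i) → v ∣ u) :
    (∃ x : k, (∀ i, (f i).eval x = 0) ∧ g.eval x ≠ 0) ↔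
      ¬ u ∣ g ^ u.natDegree := by
  obtain ⟨i, hi⟩ := hf
  have hu0 : u ≠ 0 := by
    rintro rfl
    exact hi (zero_dvd_iff.mp (hu₁ i))
  simp only [← IsRoot.def, ← isRoot_iff_forall_isRoot_of_gcd hu₁ hu₂]
  constructor
  · rintro ⟨x, hux, hgx⟩ hdvd
    exact hgx (hux.of_dvd_pow hdvd)
  · intro hndvd
    by_contra! h
    exact hndvd ((IsAlgClosed.splits u).dvd_pow_natDegree_of_isRoot hu0 h)
end
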